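/- arXiv:math/0103001 — 10 statements merged into one kernel-verified Lean document; each statement's English description precedes it below -/
import Mathlib

section
/- A Frobenius algebra A over a commutative ring k is a symmetric algebra if and only if it admits a Frobenius system (φ, x_i, y_i) whose Frobenius element ∑_i x_i ⊗ y_i ∈ A ⊗_k A is symmetric, i.e. fixed by the transpose map a ⊗ b ↦ b ⊗ a. -/
open TensorProduct

/-- `(φ, x, y)` is a Frobenius system for the `k`-algebra `A`:
`∑ i, x i • φ (y i * a) = a = ∑ i, φ (a * x i) • y i` for all `a`. -/
def IsFrobeniusSystem (k : Type*) [CommRing k] (A : Type*) [Ring A] [Algebra k A]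
    (φ : A →ₗ[k] k) {n : ℕ} (x y : Fin n → A) : Prop :=
  ∀ a : A, (∑ i, φ (y i * a) • x i = a) ∧ (∑ i, φ (a * x i) • y i = a)

/-- A Frobenius algebra `A` over a commutative ring `k` is a symmetric algebra (it admits a
Frobenius homomorphism which is a trace) if and only if it admits a Frobenius system whose
Frobenius element `∑ i, x i ⊗ y i` is symmetric, i.e. fixed by the transpose map. -/
theorem stmt_0 (k : Type*) [CommRing k] (A : Type*) [Ring A] [Algebra k A]
    (hfin : Module.Finite k A) (hproj : Module.Projective k A)
    (hFrob : ∃ (φ : A →ₗ[k] k) (n : ℕ) (x y : Fin n → A), IsFrobeniusSystem k A φ x y) :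
    (∃ (φ : A →ₗ[k] k) (n : ℕ) (x y : Fin n → A),
        IsFrobeniusSystem k A φ x y ∧ ∀ a b : A, φ (a * b) = φ (b * a)) ↔
    (∃ (φ : A →ₗ[k] k) (n : ℕ) (x y : Fin n → A),
        IsFrobeniusSystem k A φ x y ∧
        (TensorProduct.comm k A A) (∑ i, x i ⊗ₜ[k] y i) = ∑ i, x i ⊗ₜ[k] y i) := by
  clear hfin hproj hFrob
  constructor
  · rintro ⟨φ, n, x, y, hsys, htr⟩
    refine ⟨φ, n, x, y, hsys, ?_⟩
    have hx : ∀ i, x i = ∑ j, φ (x j * x i) • y j := fun i => by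
      conv_lhs => rw [← (hsys (x i)).2]
      exact Finset.sum_congr rfl fun j _ => by rw [htr]
    have key : ∑ i, x i ⊗ₜ[k] y i = ∑ j, y j ⊗ₜ[k] x j := by
      calc ∑ i, x i ⊗ₜ[k] y i
          = ∑ i, (∑ j, φ (x j * x i) • y j) ⊗ₜ[k] y i :=
            Finset.sum_congr rfl fun i _ => by rw [← hx i]
        _ = ∑ i, ∑ j, φ (x j * x i) • (y j ⊗ₜ[k] y i) := by
            simp [sum_tmul, smul_tmul']
        _ = ∑ j, ∑ i, φ (x j * x i) • (y j ⊗ₜ[k] y i) := Finset.sum_comm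
        _ = ∑ j, y j ⊗ₜ[k] (∑ i, φ (x j * x i) • y i) := by
            simp [tmul_sum, tmul_smul]
        _ = ∑ j, y j ⊗ₜ[k] x j :=
            Finset.sum_congr rfl fun j _ => by rw [(hsys (x j)).2]
    rw [map_sum]
    simp only [TensorProduct.comm_tmul]
    exact key.symm
  · rintro ⟨φ, n, x, y, hsys, hsym⟩
    refine ⟨φ, n, x, y, hsys, ?_⟩
    have hsymm' : ∑ i, y i ⊗ₜ[k] x i = ∑ i, x i ⊗ₜ[k] y i := by
      rw [map_sum] at hsym
      simpa only [TensorProduct.comm_tmul] using hsym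
    have key3 : ∀ a : A, ∑ i, φ (a * y i) • x i = a := by
      intro a
      have h2 := congrArg (TensorProduct.lift (LinearMap.mk₂ k (fun u v : A => φ (a * u) • v)
        (fun u u' v => by simp [mul_add, add_smul])
        (fun c u v => by simp [mul_smul_comm, mul_smul])
        (fun u v v' => by simp [smul_add])
        (fun c u v => by rw [smul_comm]))) hsymm'
      simp only [map_sum, TensorProduct.lift.tmul, LinearMap.mk₂_apply] at h2
      rw [h2, (hsys a).2]
    intro a b
    calc φ (a * b) = φ (a * ∑ i, φ (b * x i) • y i) := by rw [(hsys b).2]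
      _ = ∑ i, φ (b * x i) * φ (a * y i) := by
          simp [Finset.mul_sum, mul_smul_comm, smul_eq_mul]
      _ = ∑ i, φ (a * y i) * φ (b * x i) :=
          Finset.sum_congr rfl fun i _ => mul_comm _ _
      _ = φ (b * ∑ i, φ (a * y i) • x i) := by
          simp [Finset.mul_sum, mul_smul_comm, smul_eq_mul]
      _ = φ (b * a) := by rw [key3 a]
end

section
/- If A is an augmented Frobenius algebra over a commutative ring k, then the set ∫^r_A of right integrals of A is a two-sided ideal of A which is a free cyclic k-module and a direct k-module summand of A, generated by the right norm n (the element satisfying φ(n a) = ε(a) for all a ∈ A, where φ is a Frobenius homomorphism). -/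
open TensorProduct

/-- If `A` is an augmented Frobenius algebra over a commutative ring `k`, with augmentation `ε`,
Frobenius homomorphism `φ` and right norm `nrm` (so `φ (nrm * a) = ε a` for all `a`), then the
set of right integrals of `A` is a two-sided ideal, equal to the span of `nrm`, which is a free
cyclic `k`-module and a direct `k`-module summand of `A`. -/
theorem stmt_1 (k : Type*) [CommRing k] (A : Type*) [Ring A] [Algebra k A]
    (hfin : Module.Finite k A) (hproj : Module.Projective k A)
    (φ : A →ₗ[k] k) (nn : ℕ) (x y : Fin nn → A) (hsys : IsFrobeniusSystem k A φ x y)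
    (ε : A →ₐ[k] k) (nrm : A) (hnrm : ∀ a : A, φ (nrm * a) = ε a) :
    (∀ t : A, (∀ a : A, t * a = ε a • t) ↔ t ∈ Submodule.span k ({nrm} : Set A)) ∧
    (∀ t : A, (∀ a : A, t * a = ε a • t) → ∀ b a : A, (b * t) * a = ε a • (b * t)) ∧
    (∀ c : k, c • nrm = 0 → c = 0) ∧
    (∃ q : Submodule k A, IsCompl (Submodule.span k ({nrm} : Set A)) q) := by
  have hφnrm : φ nrm = 1 := by
    have := hnrm 1; rwa [mul_one, map_one] at this
  have h1 : nrm = ∑ i, ε (x i) • y i := by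
    conv_lhs => rw [← (hsys nrm).2]
    exact Finset.sum_congr rfl fun i _ => by rw [hnrm]
  have hint : ∀ a : A, nrm * a = ε a • nrm := by
    intro a
    conv_lhs => rw [← (hsys (nrm * a)).2]
    conv_rhs => rw [h1]
    rw [Finset.smul_sum]
    refine Finset.sum_congr rfl fun i _ => ?_
    rw [mul_assoc, hnrm, map_mul, mul_smul]
  have hconv : ∀ t : A, (∀ a : A, t * a = ε a • t) → t = φ t • nrm := by
    intro t ht
    conv_lhs => rw [← (hsys t).2]
    rw [h1, Finset.smul_sum]
    refine Finset.sum_congr rfl fun i _ => ?_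
    rw [ht (x i), map_smul, smul_eq_mul, mul_smul, smul_comm]
  refine ⟨fun t => ⟨fun ht => ?_, fun ht a => ?_⟩, fun t ht b a => ?_, fun c hc => ?_, ?_⟩
  · rw [Submodule.mem_span_singleton]
    exact ⟨φ t, (hconv t ht).symm⟩
  · rw [Submodule.mem_span_singleton] at ht
    obtain ⟨c, rfl⟩ := ht
    rw [smul_mul_assoc, hint, smul_comm]
  · rw [mul_assoc, ht a, mul_smul_comm]
  · have : φ (c • nrm) = 0 := by rw [hc, map_zero]
    rwa [map_smul, hφnrm, smul_eq_mul, mul_one] at this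
  · set p : A →ₗ[k] A := LinearMap.smulRight φ nrm with hp
    refine ⟨LinearMap.ker p, ?_, ?_⟩
    · rw [Submodule.disjoint_def]
      intro a ha hka
      rw [Submodule.mem_span_singleton] at ha
      obtain ⟨c, rfl⟩ := ha
      rw [LinearMap.mem_ker, hp, LinearMap.smulRight_apply, map_smul, hφnrm, smul_eq_mul,
        mul_one] at hka
      exact hka
    · rw [codisjoint_iff, eq_top_iff]
      intro a _
      have h2 : a = φ a • nrm + (a - φ a • nrm) := by abel
      rw [h2]
      refine Submodule.add_mem_sup
        (Submodule.smul_mem _ _ (Submodule.mem_span_singleton_self nrm)) ?_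
      rw [LinearMap.mem_ker, map_sub, hp, LinearMap.smulRight_apply, LinearMap.smulRight_apply,
        map_smul, hφnrm, smul_eq_mul, mul_one, sub_self]
end

section
/- If A is an augmented symmetric algebra over a commutative ring k (an augmented algebra that is a symmetric Frobenius algebra), then A is unimodular: the set of right integrals of A equals the set of left integrals of A. -/
open TensorProduct

/-- If `A` is an augmented symmetric algebra over a commutative ring `k` (an augmented algebra
which is a Frobenius algebra admitting a Frobenius homomorphism `φ` which is a trace), then `A`
is unimodular: the set of right integrals equals the set of left integrals. -/
theorem stmt_3 (k : Type*) [CommRing k] (A : Type*) [Ring A] [Algebra k A]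
    (hfin : Module.Finite k A) (hproj : Module.Projective k A)
    (φ : A →ₗ[k] k) (nn : ℕ) (x y : Fin nn → A) (hsys : IsFrobeniusSystem k A φ x y)
    (htrace : ∀ a b : A, φ (a * b) = φ (b * a))
    (ε : A →ₐ[k] k) :
    {t : A | ∀ a : A, t * a = ε a • t} = {t : A | ∀ a : A, a * t = ε a • t} := by
  ext t
  simp only [Set.mem_setOf_eq]
  constructor
  · intro ht a
    have h2 : ∀ i, φ (t * x i) = ε (x i) * φ t := by
      intro i; rw [ht (x i), map_smul, smul_eq_mul, mul_comm]
    have h1 : ∀ i, φ (a * t * x i) = ε a * (ε (x i) * φ t) := by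
      intro i
      rw [mul_assoc, htrace, mul_assoc, ht (x i * a), map_smul, smul_eq_mul, map_mul]
      ring
    have e1 : a * t = ∑ i, φ (a * t * x i) • y i := ((hsys (a * t)).2).symm
    have e2 : t = ∑ i, φ (t * x i) • y i := ((hsys t).2).symm
    calc a * t = ∑ i, φ (a * t * x i) • y i := e1
      _ = ε a • ∑ i, φ (t * x i) • y i := by
          rw [Finset.smul_sum]
          refine Finset.sum_congr rfl fun i _ => ?_
          rw [h1 i, h2 i, smul_smul]
      _ = ε a • t := by rw [← e2]
  · intro ht a
    have h2 : ∀ i, φ (y i * t) = ε (y i) * φ t := by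
      intro i; rw [ht (y i), map_smul, smul_eq_mul, mul_comm]
    have h1 : ∀ i, φ (y i * (t * a)) = ε a * (ε (y i) * φ t) := by
      intro i
      rw [← mul_assoc, htrace, ← mul_assoc, ht (a * y i), map_smul, smul_eq_mul, map_mul]
      ring
    have e1 : t * a = ∑ i, φ (y i * (t * a)) • x i := ((hsys (t * a)).1).symm
    have e2 : t = ∑ i, φ (y i * t) • x i := ((hsys t).1).symm
    calc t * a = ∑ i, φ (y i * (t * a)) • x i := e1
      _ = ε a • ∑ i, φ (y i * t) • x i := by
          rw [Finset.smul_sum]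
          refine Finset.sum_congr rfl fun i _ => ?_
          rw [h1 i, h2 i, smul_smul]
      _ = ε a • t := by rw [← e2]
end

section
/- Let H be an FH-algebra over a commutative ring k with FH-homomorphism f and right norm t. Then (f, S^{-1}(t_2), t_1) is a Frobenius system for H: for every a ∈ H one has ∑ S^{-1}(t_2) f(t_1 a) = a and ∑ f(a S^{-1}(t_2)) t_1 = a, where Δ(t) = ∑ t_1 ⊗ t_2 and S is the antipode. -/
/-!
Let `Φ b = ∑ f(t₁ b) t₂`. Applying the right-integral property of `f` to `t b` gives
`∑ Φ(b₁) b₂ = f(t b) 1 = ε(b) 1`, so `Φ` is a left convolution inverse of `id`; hence `Φ = S`,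
and `∑ f(t₁ b) S⁻¹(t₂) = b`. The other half of the Frobenius-system identity follows from this one
for any Frobenius homomorphism, by expanding with a given dual basis `(x, y)`.
-/

open TensorProduct

section Frobenius

variable {k A : Type*} [CommSemiring k] [Semiring A] [Algebra k A] {φ : A →ₗ[k] k}

lemma rid_map_mulLeft_eq_self {n : ℕ} {x y : Fin n → A}
    (hxy : ∀ a, ∑ m, φ (a * x m) • y m = a) {z : A ⊗[k] A}
    (hz : ∀ b, TensorProduct.lid k A (map (φ ∘ₗ LinearMap.mulRight k b) LinearMap.id z) = b)
    (a : A) :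
    TensorProduct.rid k A (map LinearMap.id (φ ∘ₗ LinearMap.mulLeft k a) z) = a := by
  have expand : ∀ w : A ⊗[k] A,
      TensorProduct.rid k A (map LinearMap.id (φ ∘ₗ LinearMap.mulLeft k a) w) =
        ∑ m, φ (a * TensorProduct.lid k A
          (map (φ ∘ₗ LinearMap.mulRight k (x m)) LinearMap.id w)) • y m := by
    intro w
    induction w using TensorProduct.induction_on with
    | zero => simp
    | add w w' hw hw' => simp only [map_add, hw, hw', mul_add, add_smul, Finset.sum_add_distrib]
    | tmul v u =>
      conv_lhs =>
        simp only [map_tmul, LinearMap.id_coe, id_eq, LinearMap.comp_apply, rid_tmul,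
          LinearMap.mulLeft_apply]
        rw [← hxy v]
      simp [Finset.smul_sum, smul_smul, mul_comm]
  simp only [expand, hz, hxy]

end Frobenius

section SliceMap

variable {k M N P A B : Type*} [CommSemiring k]

lemma lid_map_apply_eq_apply_lid_map [AddCommMonoid M] [Module k M] [AddCommMonoid N]
    [Module k N] [AddCommMonoid P] [Module k P] (g : M →ₗ[k] k) (S : N →ₗ[k] P) (z : M ⊗[k] N) :
    TensorProduct.lid k P (map g S z) = S (TensorProduct.lid k N (map g LinearMap.id z)) := by
  induction z using TensorProduct.induction_on with
  | zero => simp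
  | add z w hz hw => simp only [map_add, hz, hw]
  | tmul u v => simp

variable [Semiring A] [Algebra k A] [Semiring B] [Algebra k B] (f : A →ₗ[k] k)

lemma lid_map_mul_one_tmul (X : A ⊗[k] B) (z : B) :
    TensorProduct.lid k B (map f LinearMap.id (X * (1 ⊗ₜ z))) =
      TensorProduct.lid k B (map f LinearMap.id X) * z := by
  induction X using TensorProduct.induction_on with
  | zero => simp
  | add X Y hX hY => simp only [add_mul, map_add, hX, hY]
  | tmul u v => simp

lemma map_mulRight_eq_map_mul_tmul_one (X : A ⊗[k] B) (b : A) :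
    map (f ∘ₗ LinearMap.mulRight k b) LinearMap.id X = map f LinearMap.id (X * (b ⊗ₜ 1)) := by
  induction X using TensorProduct.induction_on with
  | zero => simp
  | add X Y hX hY => simp only [add_mul, map_add, hX, hY]
  | tmul u v => simp

end SliceMap

section Integral

open WithConv

variable {k H : Type*} [CommSemiring k] [Semiring H] [HopfAlgebra k H] {f : H →ₗ[k] k} {t : H}

lemma lid_map_mulRight_comul_eq_antipode
    (hri : ∀ a : H,
      TensorProduct.lid k H (map f LinearMap.id (Coalgebra.comul (R := k) a)) = f a • 1)
    (ht : ∀ a : H, f (t * a) = Coalgebra.counit (R := k) a) (b : H) :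
    TensorProduct.lid k H
        (map (f ∘ₗ LinearMap.mulRight k b) LinearMap.id (Coalgebra.comul (R := k) t)) =
      HopfAlgebra.antipode k b := by
  let Φ : H →ₗ[k] H := TensorProduct.lid k H ∘ₗ map f LinearMap.id ∘ₗ
    LinearMap.mulLeft k (Coalgebra.comul (R := k) t) ∘ₗ
      Algebra.TensorProduct.includeLeft.toLinearMap
  have hΦ : Φ b = TensorProduct.lid k H
      (map (f ∘ₗ LinearMap.mulRight k b) LinearMap.id (Coalgebra.comul (R := k) t)) := by
    simp [Φ, map_mulRight_eq_map_mul_tmul_one]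
  have hmul : LinearMap.mul' k H ∘ₗ map Φ LinearMap.id = TensorProduct.lid k H ∘ₗ
      map f LinearMap.id ∘ₗ LinearMap.mulLeft k (Coalgebra.comul (R := k) t) := by
    ext y z
    simp [Φ, ← lid_map_mul_one_tmul, mul_assoc]
  have hconv : toConv Φ * toConv LinearMap.id = 1 := by
    ext c
    have := congr($hmul (Coalgebra.comul c))
    simp only [LinearMap.comp_apply] at this
    simp [LinearMap.convMul_apply, this, ← Bialgebra.comul_mul, hri, ht, Algebra.smul_def]
  rw [← hΦ]
  exact congr($(left_inv_eq_right_inv hconv LinearMap.id_mul_antipode) b)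

end Integral

theorem stmt_4_general (k : Type*) [CommRing k] (H : Type*) [Ring H] [HopfAlgebra k H]
    (f : H →ₗ[k] k) (nn : ℕ) (x y : Fin nn → H) (hsys : IsFrobeniusSystem k H f x y)
    (hri : ∀ a : H,
      (TensorProduct.lid k H) ((TensorProduct.map f LinearMap.id) (Coalgebra.comul (R := k) a))
        = f a • (1 : H))
    (Sinv : H →ₗ[k] H)
    (hS1 : ∀ a : H, Sinv (HopfAlgebra.antipode (R := k) a) = a)
    (t : H) (ht : ∀ a : H, f (t * a) = Coalgebra.counit (R := k) a) :
    ∀ a : H,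
      (TensorProduct.lid k H)
          ((TensorProduct.map (f ∘ₗ LinearMap.mulRight k a) Sinv) (Coalgebra.comul (R := k) t)) = a ∧
      (TensorProduct.rid k H)
          ((TensorProduct.map LinearMap.id (f ∘ₗ LinearMap.mulLeft k a ∘ₗ Sinv))
            (Coalgebra.comul (R := k) t)) = a := by
  have hleft : ∀ b, TensorProduct.lid k H (map (f ∘ₗ LinearMap.mulRight k b) Sinv
      (Coalgebra.comul (R := k) t)) = b := fun b => by
    rw [lid_map_apply_eq_apply_lid_map, lid_map_mulRight_comul_eq_antipode hri ht, hS1]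
  intro a
  refine ⟨hleft a, ?_⟩
  rw [← LinearMap.comp_assoc, ← LinearMap.map_lTensor]
  refine rid_map_mulLeft_eq_self (fun a => (hsys a).2) (fun b => ?_) a
  rw [LinearMap.map_lTensor, LinearMap.id_comp, hleft]

/-- Let `H` be an FH-algebra over a commutative ring `k`: a Hopf algebra, finitely generated
projective over `k`, with a Frobenius homomorphism `f` which is a right integral in `H*`
(`∑ f(a₁) a₂ = f(a) 1`).  Let `t` be the right norm (`f (t * a) = ε a`) and `Sinv` the inverse
of the antipode.  Then `(f, S⁻¹(t₂), t₁)` is a Frobenius system: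
`∑ S⁻¹(t₂) f(t₁ a) = a = ∑ f(a S⁻¹(t₂)) t₁` for all `a`. -/
theorem stmt_4 (k : Type*) [CommRing k] (H : Type*) [Ring H] [HopfAlgebra k H]
    (hfin : Module.Finite k H) (hproj : Module.Projective k H)
    (f : H →ₗ[k] k) (nn : ℕ) (x y : Fin nn → H) (hsys : IsFrobeniusSystem k H f x y)
    (hri : ∀ a : H,
      (TensorProduct.lid k H) ((TensorProduct.map f LinearMap.id) (Coalgebra.comul (R := k) a))
        = f a • (1 : H))
    (Sinv : H →ₗ[k] H)
    (hS1 : ∀ a : H, Sinv (HopfAlgebra.antipode (R := k) a) = a)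
    (hS2 : ∀ a : H, HopfAlgebra.antipode (R := k) (Sinv a) = a)
    (t : H) (ht : ∀ a : H, f (t * a) = Coalgebra.counit (R := k) a) :
    ∀ a : H,
      (TensorProduct.lid k H)
          ((TensorProduct.map (f ∘ₗ LinearMap.mulRight k a) Sinv) (Coalgebra.comul (R := k) t)) = a ∧
      (TensorProduct.rid k H)
          ((TensorProduct.map LinearMap.id (f ∘ₗ LinearMap.mulLeft k a ∘ₗ Sinv))
            (Coalgebra.comul (R := k) t)) = a :=
  stmt_4_general k H f nn x y hsys hri Sinv hS1 t ht
end

section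
/- A finitely generated projective Hopf algebra H over a commutative ring k is an FH-algebra if and only if its dual Hopf algebra H* (with convolution product (f g)(x) = ∑ f(x_1) g(x_2), comultiplication dual to the multiplication of H, unit ε, counit f ↦ f(1), and antipode the dual of S) is an FH-algebra. -/
/-!
For `t ∈ H` let `Ψ_t : H* → H`, `g ↦ ∑ g(t₁) t₂`. Since `(f g)(t) = g(Ψ_t f)`, evaluation at `t`
is a Frobenius homomorphism of the convolution algebra `H*` exactly when `Ψ_t` (equivalently, by
reflexivity, its mirror `g ↦ ∑ t₁ g(t₂)`) is bijective; likewise `φ` is a Frobenius homomorphism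
of `H` exactly when `θ : a ↦ φ(· a)` is bijective.

If `φ` is a right integral in `H*`, then `∑ φ(c₁ a) c₂ = ∑ φ(c a₁) S(a₂)`. For `t` with
`φ(t ·) = ε` this reads `Ψ_t ∘ θ = S`, so both directions come down to the bijectivity of the
antipode `S`. Being an endomorphism of a finitely generated module, `S` is bijective as soon as it
is surjective, and surjectivity is the same identity read at an element `u` with `φ(· u) = ε`
(or its mirror for a left integral). From `H` to `H*`, `t` is the element with `φ(t ·) = ε`;
back from `H*` to `H`, `φ := Ψ_t⁻¹ 1` is a right integral with `φ(t ·) = ε`.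
-/

open TensorProduct

/-- The convolution product on the dual `H* = Hom_k(H, k)` of a coalgebra:
`(conv f g) a = ∑ f(a₁) g(a₂)`. -/
noncomputable def conv (k : Type*) [CommRing k] (H : Type*) [AddCommGroup H] [Module k H]
    [Coalgebra k H] (f g : H →ₗ[k] k) : H →ₗ[k] k :=
  (LinearMap.mul' k k) ∘ₗ (TensorProduct.map f g) ∘ₗ (Coalgebra.comul (R := k))

open Module LinearMap Coalgebra HopfAlgebra WithConv

section Pairing

variable {k M : Type*} [CommRing k] [AddCommGroup M] [Module k M]

theorem Module.exists_sum_dual_smul_eq [Module.Finite k M] [Module.Projective k M] :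
    ∃ (n : ℕ) (e : Fin n → M) (e' : Fin n → Dual k M), ∀ a, ∑ i, e' i a • e i = a := by
  obtain ⟨n, f, g, -, -, hfg⟩ := Module.Finite.exists_comp_eq_id_of_projective k M
  refine ⟨n, fun i => f fun j => if i = j then 1 else 0, fun i => proj i ∘ₗ g, fun a => ?_⟩
  simpa [← pi_apply_eq_sum_univ] using congr($hfg a)

theorem LinearMap.isPerfPair_of_sum_smul_eq [IsReflexive k M] (β : M →ₗ[k] M →ₗ[k] k)
    {n : ℕ} {x y : Fin n → M} (h : ∀ a, ∑ i, β (y i) a • x i = a ∧ ∑ i, β a (x i) • y i = a) :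
    β.IsPerfPair := by
  refine .of_bijective β ⟨fun a b hab => ?_, fun g => ⟨∑ i, g (x i) • y i, ?_⟩⟩
  · rw [← (h a).2, ← (h b).2, hab]
  · ext b
    conv_rhs => rw [← (h b).1]
    simp [mul_comm]

theorem LinearMap.IsPerfPair.exists_sum_smul_eq [Module.Finite k M] [Module.Projective k M]
    (β : M →ₗ[k] M →ₗ[k] k) [β.IsPerfPair] :
    ∃ (n : ℕ) (x y : Fin n → M), ∀ a, ∑ i, β (y i) a • x i = a ∧ ∑ i, β a (x i) • y i = a := by
  obtain ⟨n, e, e', he⟩ := exists_sum_dual_smul_eq (k := k) (M := M)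
  refine ⟨n, e, fun i => β.toPerfPair.symm (e' i), fun a => ⟨by simpa using he a, ?_⟩⟩
  apply (IsPerfPair.bijective_left β).injective
  ext b
  conv_rhs => rw [← he b]
  simp [mul_comm]

theorem LinearMap.exists_sum_smul_eq_iff_isPerfPair [Module.Finite k M] [Module.Projective k M]
    (β : M →ₗ[k] M →ₗ[k] k) :
    (∃ (n : ℕ) (x y : Fin n → M), ∀ a, ∑ i, β (y i) a • x i = a ∧ ∑ i, β a (x i) • y i = a) ↔
      β.IsPerfPair :=
  ⟨fun ⟨_, _, _, h⟩ => isPerfPair_of_sum_smul_eq β h, fun _ => IsPerfPair.exists_sum_smul_eq β⟩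

end Pairing

section FrobeniusForm

variable {k A : Type*} [CommRing k] [Ring A] [Algebra k A]

noncomputable def frobeniusForm (φ : A →ₗ[k] k) : A →ₗ[k] A →ₗ[k] k :=
  (LinearMap.mul k A).compr₂ φ

@[simp] lemma frobeniusForm_apply (φ : A →ₗ[k] k) (a b : A) : frobeniusForm φ a b = φ (a * b) :=
  rfl

theorem exists_isFrobeniusSystem_iff_isPerfPair [Module.Finite k A] [Module.Projective k A]
    (φ : A →ₗ[k] k) :
    (∃ (n : ℕ) (x y : Fin n → A), IsFrobeniusSystem k A φ x y) ↔ (frobeniusForm φ).IsPerfPair :=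
  (frobeniusForm φ).exists_sum_smul_eq_iff_isPerfPair

end FrobeniusForm

section Hit

variable {k H : Type*} [CommRing k] [AddCommGroup H] [Module k H] [Coalgebra k H]

noncomputable def rightHit : (H →ₗ[k] k) →ₗ[k] H →ₗ[k] H :=
  LinearMap.mk₂ k (fun f a => TensorProduct.lid k H (f.rTensor H (comul a)))
    (by simp [rTensor_add]) (by simp [rTensor_smul]) (by simp) (by simp)

noncomputable def leftHit : (H →ₗ[k] k) →ₗ[k] H →ₗ[k] H :=
  LinearMap.mk₂ k (fun g a => TensorProduct.rid k H (g.lTensor H (comul a)))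
    (by simp [lTensor_add]) (by simp [lTensor_smul]) (by simp) (by simp)

lemma rightHit_apply (f : H →ₗ[k] k) (a : H) :
    rightHit f a = TensorProduct.lid k H (f.rTensor H (comul a)) := rfl

lemma leftHit_apply (g : H →ₗ[k] k) (a : H) :
    leftHit g a = TensorProduct.rid k H (g.lTensor H (comul a)) := rfl

lemma conv_assoc (f g h : H →ₗ[k] k) : conv k H (conv k H f g) h = conv k H f (conv k H g h) :=
  congrArg ofConv (mul_assoc (toConv f) (toConv g) (toConv h))

lemma apply_rightHit (f g : H →ₗ[k] k) (a : H) : g (rightHit f a) = conv k H f g a := by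
  rw [rightHit_apply, conv, comp_apply, comp_apply]
  induction comul (R := k) a using TensorProduct.induction_on with
  | zero => simp
  | tmul x y => simp
  | add u v hu hv => simp_all

lemma apply_leftHit (f g : H →ₗ[k] k) (a : H) : f (leftHit g a) = conv k H f g a := by
  rw [leftHit_apply, conv, comp_apply, comp_apply]
  induction comul (R := k) a using TensorProduct.induction_on with
  | zero => simp
  | tmul x y => simp [mul_comm]
  | add u v hu hv => simp_all

@[simp] lemma rightHit_counit (a : H) : rightHit (counit (R := k)) a = a := by
  simp [rightHit_apply]

@[simp] lemma leftHit_counit (a : H) : leftHit (counit (R := k)) a = a := by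
  simp [leftHit_apply]

lemma conv_counit (f : H →ₗ[k] k) : conv k H f counit = f :=
  congrArg ofConv (mul_one (toConv f))

lemma counit_conv (f : H →ₗ[k] k) : conv k H counit f = f :=
  congrArg ofConv (one_mul (toConv f))

@[simp] lemma counit_rightHit (f : H →ₗ[k] k) (a : H) : counit (R := k) (rightHit f a) = f a := by
  rw [apply_rightHit, conv_counit]

@[simp] lemma counit_leftHit (g : H →ₗ[k] k) (a : H) : counit (R := k) (leftHit g a) = g a := by
  rw [apply_leftHit, counit_conv]

lemma rightHit_rightHit [Projective k H] (f g : H →ₗ[k] k) (a : H) :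
    rightHit g (rightHit f a) = rightHit (conv k H f g) a := by
  refine Module.eval_apply_injective k (LinearMap.ext fun h => ?_)
  simp only [Dual.eval_apply, apply_rightHit, conv_assoc]

lemma leftHit_leftHit [Projective k H] (f g : H →ₗ[k] k) (a : H) :
    leftHit f (leftHit g a) = leftHit (conv k H f g) a := by
  refine Module.eval_apply_injective k (LinearMap.ext fun h => ?_)
  simp only [Dual.eval_apply, apply_leftHit, conv_assoc]

end Hit

section BialgebraHit

variable {k H : Type*} [CommRing k] [Ring H] [Bialgebra k H]

@[simp] lemma rightHit_one (f : H →ₗ[k] k) : rightHit f (1 : H) = f 1 • (1 : H) := by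
  simp [rightHit_apply, Algebra.TensorProduct.one_def]

@[simp] lemma leftHit_one (f : H →ₗ[k] k) : leftHit f (1 : H) = f 1 • (1 : H) := by
  simp [leftHit_apply, Algebra.TensorProduct.one_def]

lemma lid_rTensor_frobeniusForm_flip_mul (f : H →ₗ[k] k) (x y : H) (w : H ⊗[k] H) :
    TensorProduct.lid k H (((frobeniusForm f).flip x).rTensor H w) * y =
      TensorProduct.lid k H (f.rTensor H (w * (x ⊗ₜ y))) := by
  induction w using TensorProduct.induction_on with
  | zero => simp
  | tmul p q => simp
  | add u v hu hv => simp_all [add_mul]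

lemma mul_rid_lTensor_frobeniusForm (f : H →ₗ[k] k) (x y : H) (w : H ⊗[k] H) :
    x * TensorProduct.rid k H ((frobeniusForm f y).lTensor H w) =
      TensorProduct.rid k H (f.lTensor H ((x ⊗ₜ y) * w)) := by
  induction w using TensorProduct.induction_on with
  | zero => simp
  | tmul p q => simp
  | add u v hu hv => simp_all [mul_add]

end BialgebraHit

section Antipode

variable {k H : Type*} [CommRing k] [Ring H] [HopfAlgebra k H]

/- `∑ φ(c₁ a) c₂ = ∑ φ(c a₁) S(a₂)`. As maps of `a`, the left side `Φ` satisfies `Φ * id = Λ` in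
the convolution algebra `End H`, because `Δ` is multiplicative and `φ` is a right integral;
multiplying by `S` on the right gives `Φ = Λ * S`, which is the right side. -/
theorem rightHit_frobeniusForm_flip (φ : H →ₗ[k] k) (hφ : ∀ a, rightHit φ a = φ a • (1 : H))
    (a c : H) :
    rightHit ((frobeniusForm φ).flip a) c = antipode k (rightHit (frobeniusForm φ c) a) := by
  set Φ : H →ₗ[k] H := rightHit.flip c ∘ₗ (frobeniusForm φ).flip
  set Λ : H →ₗ[k] H := Algebra.linearMap k H ∘ₗ frobeniusForm φ c
  have hΦ : toConv Φ * toConv LinearMap.id = toConv Λ := by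
    have key : ∀ w, mul' k H (map Φ LinearMap.id w) =
        TensorProduct.lid k H (φ.rTensor H (comul c * w)) := by
      intro w
      induction w using TensorProduct.induction_on with
      | zero => simp
      | tmul x y => simp [Φ, rightHit_apply, lid_rTensor_frobeniusForm_flip_mul]
      | add u v hu hv => simp_all [mul_add]
    ext a
    rw [convMul_apply]
    simp [key, ← Bialgebra.comul_mul, ← rightHit_apply, hφ, Λ, Algebra.algebraMap_eq_smul_one]
  have hΦΛ : toConv Φ = toConv Λ * toConv (antipode k) := by
    rw [← hΦ, mul_assoc, id_mul_antipode, mul_one]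
  calc rightHit ((frobeniusForm φ).flip a) c = (toConv Φ) a := rfl
    _ = (toConv Λ * toConv (antipode k) : WithConv (H →ₗ[k] H)) a := by rw [← hΦΛ]
    _ = antipode k (rightHit (frobeniusForm φ c) a) := by
      rw [convMul_apply, rightHit_apply]
      induction comul (R := k) a using TensorProduct.induction_on with
      | zero => simp
      | tmul x y => simp [Λ, Algebra.algebraMap_eq_smul_one]
      | add u v hu hv => simp_all

theorem leftHit_frobeniusForm (φ : H →ₗ[k] k) (hφ : ∀ a, leftHit φ a = φ a • (1 : H))
    (a c : H) :
    leftHit (frobeniusForm φ a) c = antipode k (leftHit ((frobeniusForm φ).flip c) a) := by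
  set Φ : H →ₗ[k] H := leftHit.flip c ∘ₗ frobeniusForm φ
  set Λ : H →ₗ[k] H := Algebra.linearMap k H ∘ₗ (frobeniusForm φ).flip c
  have hΦ : toConv LinearMap.id * toConv Φ = toConv Λ := by
    have key : ∀ w, mul' k H (map LinearMap.id Φ w) =
        TensorProduct.rid k H (φ.lTensor H (w * comul c)) := by
      intro w
      induction w using TensorProduct.induction_on with
      | zero => simp
      | tmul x y => simp [Φ, leftHit_apply, mul_rid_lTensor_frobeniusForm]
      | add u v hu hv => simp_all [add_mul]
    ext a
    rw [convMul_apply]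
    simp [key, ← Bialgebra.comul_mul, ← leftHit_apply, hφ, Λ, Algebra.algebraMap_eq_smul_one]
  have hΦΛ : toConv Φ = toConv (antipode k) * toConv Λ := by
    rw [← hΦ, ← mul_assoc, antipode_mul_id, one_mul]
  calc leftHit (frobeniusForm φ a) c = (toConv Φ) a := rfl
    _ = (toConv (antipode k) * toConv Λ : WithConv (H →ₗ[k] H)) a := by rw [← hΦΛ]
    _ = antipode k (leftHit ((frobeniusForm φ).flip c) a) := by
      rw [convMul_apply, leftHit_apply]
      induction comul (R := k) a using TensorProduct.induction_on with
      | zero => simp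
      | tmul x y => simp [Λ, Algebra.algebraMap_eq_smul_one]
      | add u v hu hv => simp_all

theorem rightHit_flip_comp_frobeniusForm_flip (φ : H →ₗ[k] k)
    (hφ : ∀ a, rightHit φ a = φ a • (1 : H)) {t : H} (ht : frobeniusForm φ t = counit) :
    rightHit.flip t ∘ₗ (frobeniusForm φ).flip = antipode k := by
  ext a
  simpa [ht] using rightHit_frobeniusForm_flip φ hφ a t

theorem antipode_surjective_of_rightHit (φ : H →ₗ[k] k)
    (hφ : ∀ a, rightHit φ a = φ a • (1 : H)) {u : H} (hu : (frobeniusForm φ).flip u = counit) :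
    Function.Surjective (antipode k : H →ₗ[k] H) :=
  fun c => ⟨rightHit (frobeniusForm φ c) u,
    by simpa [hu] using (rightHit_frobeniusForm_flip φ hφ u c).symm⟩

theorem antipode_surjective_of_leftHit (φ : H →ₗ[k] k)
    (hφ : ∀ a, leftHit φ a = φ a • (1 : H)) {t : H} (ht : frobeniusForm φ t = counit) :
    Function.Surjective (antipode k : H →ₗ[k] H) :=
  fun c => ⟨leftHit ((frobeniusForm φ).flip c) t,
    by simpa [ht] using (leftHit_frobeniusForm φ hφ t c).symm⟩

end Antipode

section ConvForm

variable {k H : Type*} [CommRing k] [AddCommGroup H] [Module k H] [Coalgebra k H]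

variable (k) in
noncomputable def convForm (t : H) : (H →ₗ[k] k) →ₗ[k] (H →ₗ[k] k) →ₗ[k] k :=
  Dual.eval k H ∘ₗ rightHit.flip t

lemma convForm_apply (t : H) (f g : H →ₗ[k] k) : convForm k t f g = conv k H f g t :=
  apply_rightHit f g t

lemma convForm_flip (t : H) : (convForm k t).flip = Dual.eval k H ∘ₗ leftHit.flip t := by
  ext f g
  simp [convForm_apply, apply_leftHit]

variable [Module.Finite k H] [Projective k H] {t : H}

lemma isPerfPair_convForm (h : Function.Bijective (rightHit.flip t : (H →ₗ[k] k) →ₗ[k] H)) :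
    (convForm k t).IsPerfPair :=
  .of_bijective _ ((bijective_dual_eval k H).comp h)

lemma bijective_rightHit_flip [(convForm k t).IsPerfPair] :
    Function.Bijective (rightHit.flip t : (H →ₗ[k] k) →ₗ[k] H) :=
  (Function.Bijective.of_comp_iff' (bijective_dual_eval k H) _).1
    (IsPerfPair.bijective_left (convForm k t))

lemma bijective_leftHit_flip [(convForm k t).IsPerfPair] :
    Function.Bijective (leftHit.flip t : (H →ₗ[k] k) →ₗ[k] H) := by
  refine (Function.Bijective.of_comp_iff' (bijective_dual_eval k H) _).1 ?_
  rw [← coe_comp, ← convForm_flip]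
  exact IsPerfPair.bijective_right (convForm k t)

end ConvForm

section Integral

variable {k H : Type*} [CommRing k] [Ring H] [HopfAlgebra k H] [Projective k H] {t : H}

theorem exists_rightHit_eq_smul_one (ht : ∀ a, t * a = counit (R := k) a • t)
    (hΨ : Function.Bijective (rightHit.flip t : (H →ₗ[k] k) →ₗ[k] H)) :
    ∃ φ : H →ₗ[k] k, (∀ a, rightHit φ a = φ a • (1 : H)) ∧ frobeniusForm φ t = counit := by
  obtain ⟨φ, hφ⟩ := hΨ.2 1
  rw [flip_apply] at hφ
  have hconv (g : H →ₗ[k] k) : conv k H φ g = g 1 • φ :=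
    hΨ.1 (by simp [← rightHit_rightHit, hφ])
  refine ⟨φ, fun a => eval_apply_injective k (ext fun g => ?_), ext fun b => ?_⟩
  · simp [apply_rightHit, hconv, mul_comm]
  · have hφt : φ t = 1 := by simpa [hφ] using (counit_rightHit φ t).symm
    simp [ht, hφt]

theorem exists_leftHit_eq_smul_one (ht : ∀ a, t * a = counit (R := k) a • t)
    (hΨ : Function.Bijective (leftHit.flip t : (H →ₗ[k] k) →ₗ[k] H)) :
    ∃ φ : H →ₗ[k] k, (∀ a, leftHit φ a = φ a • (1 : H)) ∧ frobeniusForm φ t = counit := by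
  obtain ⟨φ, hφ⟩ := hΨ.2 1
  rw [flip_apply] at hφ
  have hconv (g : H →ₗ[k] k) : conv k H g φ = g 1 • φ :=
    hΨ.1 (by simp [← leftHit_leftHit, hφ])
  refine ⟨φ, fun a => eval_apply_injective k (ext fun g => ?_), ext fun b => ?_⟩
  · simp [apply_leftHit, hconv, mul_comm]
  · have hφt : φ t = 1 := by simpa [hφ] using (counit_leftHit φ t).symm
    simp [ht, hφt]

end Integral

section FH

variable {k H : Type*} [CommRing k] [Ring H] [HopfAlgebra k H] [Module.Finite k H] [Projective k H]

theorem exists_isPerfPair_convForm (φ : H →ₗ[k] k) (hφ : ∀ a, rightHit φ a = φ a • (1 : H))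
    [(frobeniusForm φ).IsPerfPair] :
    ∃ t : H, (convForm k t).IsPerfPair ∧ ∀ a, t * a = counit (R := k) a • t := by
  obtain ⟨t, ht⟩ := (IsPerfPair.bijective_left (frobeniusForm φ)).2 counit
  obtain ⟨u, hu⟩ := (IsPerfPair.bijective_right (frobeniusForm φ)).2 counit
  have hS := OrzechProperty.bijective_of_surjective_endomorphism _
    (antipode_surjective_of_rightHit φ hφ hu)
  have hΨ : Function.Bijective (rightHit.flip t : (H →ₗ[k] k) →ₗ[k] H) := by
    rw [← Function.Bijective.of_comp_iff _ (IsPerfPair.bijective_right (frobeniusForm φ)),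
      ← coe_comp, rightHit_flip_comp_frobeniusForm_flip φ hφ ht]
    exact hS
  refine ⟨t, isPerfPair_convForm hΨ, fun a =>
    (IsPerfPair.bijective_left (frobeniusForm φ)).1 (ext fun b => ?_)⟩
  have hεt (c : H) : φ (t * c) = counit c := congr($ht c)
  simp [mul_assoc, hεt, Bialgebra.counit_mul]

theorem exists_isPerfPair_frobeniusForm {t : H} (ht : ∀ a, t * a = counit (R := k) a • t)
    [(convForm k t).IsPerfPair] :
    ∃ φ : H →ₗ[k] k, (∀ a, rightHit φ a = φ a • (1 : H)) ∧ (frobeniusForm φ).IsPerfPair := by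
  obtain ⟨φ, hφ, hφt⟩ := exists_rightHit_eq_smul_one ht (bijective_rightHit_flip (t := t))
  obtain ⟨ψ, hψ, hψt⟩ := exists_leftHit_eq_smul_one ht (bijective_leftHit_flip (t := t))
  have hS := OrzechProperty.bijective_of_surjective_endomorphism _
    (antipode_surjective_of_leftHit ψ hψ hψt)
  have hθ : Function.Bijective (frobeniusForm φ).flip := by
    rw [← Function.Bijective.of_comp_iff' (bijective_rightHit_flip (t := t)), ← coe_comp,
      rightHit_flip_comp_frobeniusForm_flip φ hφ hφt]
    exact hS
  have := IsPerfPair.of_bijective _ hθ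
  exact ⟨φ, hφ, by simpa using this.flip⟩

end FH

/-- A finitely generated projective Hopf algebra `H` over a commutative ring `k` is an
FH-algebra (i.e. admits a Frobenius homomorphism `f` which is a right integral in `H*`)
if and only if its dual Hopf algebra `H*` (with the convolution product, unit `ε`, and
counit/right-integral structure dualized via the canonical identification `H ≅ H**`) is an
FH-algebra; the latter amounts to: `H*` is finitely generated projective over `k` and there
is `t ∈ H` which is a right integral of `H` (the FH-homomorphism of `H*` being evaluation
at `t`) such that evaluation at `t` is a Frobenius homomorphism for the convolution
algebra `H*`. -/
theorem stmt_5 (k : Type*) [CommRing k] (H : Type*) [Ring H] [HopfAlgebra k H]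
    (hfin : Module.Finite k H) (hproj : Module.Projective k H) :
    (∃ (f : H →ₗ[k] k) (n : ℕ) (x y : Fin n → H),
        IsFrobeniusSystem k H f x y ∧
        ∀ a : H,
          (TensorProduct.lid k H) ((TensorProduct.map f LinearMap.id) (Coalgebra.comul (R := k) a))
            = f a • (1 : H)) ↔
    (Module.Finite k (H →ₗ[k] k) ∧ Module.Projective k (H →ₗ[k] k) ∧
      ∃ (t : H) (n : ℕ) (F G : Fin n → (H →ₗ[k] k)),
        (∀ g : H →ₗ[k] k,
          (∑ i, (conv k H (G i) g) t • F i = g) ∧ (∑ i, (conv k H g (F i)) t • G i = g)) ∧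
        (∀ a : H, t * a = Coalgebra.counit (R := k) a • t)) := by
  constructor
  · rintro ⟨f, n, x, y, hsys, hf⟩
    have := (exists_isFrobeniusSystem_iff_isPerfPair f).1 ⟨n, x, y, hsys⟩
    obtain ⟨t, ht, hti⟩ := exists_isPerfPair_convForm f hf
    obtain ⟨m, F, G, hFG⟩ := IsPerfPair.exists_sum_smul_eq (convForm k t)
    exact ⟨inferInstance, inferInstance, t, m, F, G, by simpa only [convForm_apply] using hFG, hti⟩
  · rintro ⟨-, -, t, n, F, G, hFG, hti⟩
    have := isPerfPair_of_sum_smul_eq (convForm k t) (x := F) (y := G)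
      (by simpa only [convForm_apply] using hFG)
    obtain ⟨f, hf, hperf⟩ := exists_isPerfPair_frobeniusForm hti
    obtain ⟨n, x, y, hsys⟩ := (exists_isFrobeniusSystem_iff_isPerfPair f).2 hperf
    exact ⟨f, n, x, y, hsys, hf⟩
end

section
/- If H is an FH-algebra over a commutative ring k with FH-homomorphism f and right norm t, then in H ⊗_k H the identity ∑ t_2 ⊗ t_1 = ∑ b^{-1} S²(t_1) ⊗ t_2 holds, where Δ(t) = ∑ t_1 ⊗ t_2, S is the antipode, and b is the right distinguished group-like element of H. -/
open TensorProduct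

/-!
Write `Φ_c(u ⊗ v) = f(v c) u`. Since `∑ f(a xᵢ) yᵢ = a`, an element of `H ⊗ H` is determined by
its images under all `Φ_c`, and it suffices to show that both sides are sent to `S c`.

Both computations take place in the convolution algebra `Hom(H, H)`, where `S` is the inverse of
`id`. For `L(c) = ∑ f(t₁ c) t₂`, the right integral property gives `L ⋆ id = f(t ·) 1 = ε`, so
`L = S`; this is the left side. Dually, `g · f = g(b) f` amounts to `∑ c₁ f(c₂) = f(c) b`, which
gives `id ⋆ N = f(· c) b` for `N(a) = ∑ f(a c₂) c₁`, hence `N = S ⋆ f(· c) b`, and evaluating at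
`t` yields `∑ f(t₂ c) S(t₁) b = c`. As `b` is group-like, `S(S(t₁) b) = b⁻¹ S²(t₁)`, and applying
`S` gives the right side.
-/

open HopfAlgebra WithConv
open scoped Coalgebra

namespace IsFrobeniusSystem

variable {k A : Type*} [CommRing k] [Ring A] [Algebra k A] {φ : A →ₗ[k] k} {n : ℕ}
  {x y : Fin n → A}

theorem eq_of_forall_dual_eq (h : IsFrobeniusSystem k A φ x y) {u v : A}
    (huv : ∀ g : A →ₗ[k] k, g u = g v) : u = v := by
  rw [← (h u).1, ← (h v).1]
  exact Finset.sum_congr rfl fun i _ => by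
    rw [← LinearMap.mulLeft_apply (R := k), ← LinearMap.comp_apply, huv,
      LinearMap.comp_apply, LinearMap.mulLeft_apply]

theorem tensor_ext (h : IsFrobeniusSystem k A φ x y) {M : Type*} [AddCommGroup M] [Module k M]
    {z z' : M ⊗[k] A}
    (hzz' : ∀ c : A,
      TensorProduct.rid k M (LinearMap.lTensor M (φ ∘ₗ LinearMap.mulRight k c) z) =
        TensorProduct.rid k M (LinearMap.lTensor M (φ ∘ₗ LinearMap.mulRight k c) z')) :
    z = z' := by
  let F : M ⊗[k] A →ₗ[k] M ⊗[k] A := ∑ i, (TensorProduct.mk k M A).flip (y i) ∘ₗ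
    (TensorProduct.rid k M).toLinearMap ∘ₗ LinearMap.lTensor M (φ ∘ₗ LinearMap.mulRight k (x i))
  have hF : F = LinearMap.id := TensorProduct.ext' fun m a => by
    conv_rhs => rw [LinearMap.id_apply, ← (h a).2, TensorProduct.tmul_sum]
    simp [F]
  rw [← LinearMap.id_apply (R := k) z, ← LinearMap.id_apply (R := k) z', ← hF]
  simp only [F, LinearMap.sum_apply, LinearMap.comp_apply, LinearEquiv.coe_coe, hzz']

end IsFrobeniusSystem

theorem conv_apply_eq_apply_rid {k H : Type*} [CommRing k] [AddCommGroup H] [Module k H]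
    [Coalgebra k H] (g f : H →ₗ[k] k) (c : H) :
    conv k H g f c =
      g (TensorProduct.rid k H (TensorProduct.map LinearMap.id f (Coalgebra.comul c))) := by
  simp only [conv, LinearMap.comp_apply]
  rw [← (ℛ k c).eq]
  simp [map_sum, mul_comm]

section Sweedler

variable {k H ι κ : Type*} [CommSemiring k] [Semiring H] [HopfAlgebra k H] {f : H →ₗ[k] k}
  {a c : H}

theorem sum_counit_right_smul (r : Coalgebra.Repr k a ι) :
    ∑ i ∈ r.index, Coalgebra.counit (R := k) (r.right i) • r.left i = a := by
  simpa only [map_sum, TensorProduct.rid_tmul, one_smul] using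
    congrArg (TensorProduct.rid k H) (Coalgebra.sum_tmul_counit_eq r)

theorem sum_apply_left_mul_smul_right_eq
    (hf : ∀ a, TensorProduct.lid k H (TensorProduct.map f LinearMap.id (Coalgebra.comul a)) =
      f a • 1)
    (ra : Coalgebra.Repr k a ι) (rc : Coalgebra.Repr k c κ) :
    ∑ p ∈ ra.index, f (ra.left p * c) • ra.right p =
      ∑ i ∈ rc.index, f (a * rc.left i) • antipode k (rc.right i) := by
  let L : H →ₗ[k] H :=
    ∑ p ∈ ra.index, (f ∘ₗ LinearMap.mulLeft k (ra.left p)).smulRight (ra.right p)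
  have hL : toConv L * toConv LinearMap.id =
      toConv ((f ∘ₗ LinearMap.mulLeft k a).smulRight 1) := by
    ext d
    rw [(ℛ k d).convMul_apply]
    have := hf (a * d)
    rw [← (ra.mul (ℛ k d)).eq] at this
    simp only [Coalgebra.Repr.mul_index, Coalgebra.Repr.mul_left, Coalgebra.Repr.mul_right,
      Finset.sum_product, map_sum, map_tmul, LinearMap.id_coe, id_eq, lid_tmul, LinearMap.coe_sum,
      LinearMap.coe_smulRight, LinearMap.coe_comp, Function.comp_apply, LinearMap.mulLeft_apply,
      Finset.sum_apply, Finset.sum_mul, Algebra.smul_mul_assoc, L] at this ⊢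
    rw [Finset.sum_comm, this]
  calc ∑ p ∈ ra.index, f (ra.left p * c) • ra.right p
      = (toConv L * toConv LinearMap.id * toConv (antipode k) : WithConv (H →ₗ[k] H)) c := by
        rw [mul_assoc, LinearMap.id_mul_antipode, mul_one]
        simp [L]
    _ = _ := by rw [hL, rc.convMul_apply]; simp

theorem sum_apply_right_mul_smul_antipode_left_mul_eq {b : H}
    (hf : ∀ a, TensorProduct.rid k H (TensorProduct.map LinearMap.id f (Coalgebra.comul a)) =
      f a • b)
    (ra : Coalgebra.Repr k a ι) (rc : Coalgebra.Repr k c κ) :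
    ∑ p ∈ ra.index, f (ra.right p * c) • (antipode k (ra.left p) * b) =
      ∑ i ∈ rc.index, f (a * rc.right i) • rc.left i := by
  let N : H →ₗ[k] H :=
    ∑ i ∈ rc.index, (f ∘ₗ LinearMap.mulRight k (rc.right i)).smulRight (rc.left i)
  have hN : toConv LinearMap.id * toConv N =
      toConv ((f ∘ₗ LinearMap.mulRight k c).smulRight b) := by
    ext d
    rw [(ℛ k d).convMul_apply]
    have := hf (d * c)
    rw [← ((ℛ k d).mul rc).eq] at this
    simpa [N, map_sum, Finset.sum_product, Finset.mul_sum] using this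
  calc ∑ p ∈ ra.index, f (ra.right p * c) • (antipode k (ra.left p) * b)
      = (toConv (antipode k) * toConv LinearMap.id * toConv N : WithConv (H →ₗ[k] H)) a := by
        rw [mul_assoc, hN, ra.convMul_apply]
        simp
    _ = _ := by rw [LinearMap.antipode_mul_id, one_mul]; simp [N]

end Sweedler

theorem stmt_7_general (k : Type*) [CommRing k] (H : Type*) [Ring H] [HopfAlgebra k H]
    (f : H →ₗ[k] k) (nn : ℕ) (x y : Fin nn → H) (hsys : IsFrobeniusSystem k H f x y)
    (hri : ∀ a : H,
      (TensorProduct.lid k H) ((TensorProduct.map f LinearMap.id) (Coalgebra.comul (R := k) a))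
        = f a • (1 : H))
    (t : H) (ht : ∀ a : H, f (t * a) = Coalgebra.counit (R := k) a)
    (b binv : H) (hb2 : binv * b = 1)
    (hbgl : Coalgebra.comul (R := k) b = b ⊗ₜ[k] b) (hbcu : Coalgebra.counit (R := k) b = 1)
    (hbdist : ∀ (g : H →ₗ[k] k) (c : H), (conv k H g f) c = g b * f c) :
    (TensorProduct.comm k H H) (Coalgebra.comul (R := k) t) =
      (TensorProduct.map
          (LinearMap.mulLeft k binv ∘ₗ
            (HopfAlgebra.antipode (R := k) ∘ₗ HopfAlgebra.antipode (R := k)))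
          LinearMap.id)
        (Coalgebra.comul (R := k) t) := by
  have hS : ∀ u, antipode k (u * b) = binv * antipode k u := fun u => by
    rw [antipode_mul_antidistrib,
      left_inv_eq_right_inv hb2 (IsGroupLikeElem.mk hbcu hbgl).mul_antipode_cancel]
  have hleft : ∀ c,
      TensorProduct.rid k H (TensorProduct.map LinearMap.id f (Coalgebra.comul c)) = f c • b :=
    fun c => hsys.eq_of_forall_dual_eq fun g => by
      rw [← conv_apply_eq_apply_rid, hbdist, map_smul, smul_eq_mul, mul_comm]
  refine hsys.tensor_ext fun c => ?_
  let rt := ℛ k t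
  rw [← rt.eq]
  simp only [map_sum, TensorProduct.comm_tmul, TensorProduct.map_tmul, LinearMap.lTensor_tmul,
    TensorProduct.rid_tmul, LinearMap.comp_apply, LinearMap.mulRight_apply,
    LinearMap.mulLeft_apply, LinearMap.id_apply]
  trans antipode k c
  · rw [sum_apply_left_mul_smul_right_eq hri rt (ℛ k c)]
    simp only [ht, ← map_smul, ← map_sum, Coalgebra.sum_counit_smul]
  · simp only [← hS, ← map_smul, ← map_sum,
      sum_apply_right_mul_smul_antipode_left_mul_eq hleft rt (ℛ k c), ht, sum_counit_right_smul]

/-- Radford's formula for FH-algebras: if `H` is an FH-algebra over a commutative ring `k`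
with FH-homomorphism `f`, right norm `t`, and right distinguished group-like element `b`
(an invertible group-like element with `g · f = g(b) · f` for all `g ∈ H*`), then
`∑ t₂ ⊗ t₁ = ∑ b⁻¹ S²(t₁) ⊗ t₂` in `H ⊗ H`. -/
theorem stmt_7 (k : Type*) [CommRing k] (H : Type*) [Ring H] [HopfAlgebra k H]
    (hfin : Module.Finite k H) (hproj : Module.Projective k H)
    (f : H →ₗ[k] k) (nn : ℕ) (x y : Fin nn → H) (hsys : IsFrobeniusSystem k H f x y)
    (hri : ∀ a : H,
      (TensorProduct.lid k H) ((TensorProduct.map f LinearMap.id) (Coalgebra.comul (R := k) a))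
        = f a • (1 : H))
    (t : H) (ht : ∀ a : H, f (t * a) = Coalgebra.counit (R := k) a)
    (b binv : H) (hb1 : b * binv = 1) (hb2 : binv * b = 1)
    (hbgl : Coalgebra.comul (R := k) b = b ⊗ₜ[k] b) (hbcu : Coalgebra.counit (R := k) b = 1)
    (hbdist : ∀ (g : H →ₗ[k] k) (c : H), (conv k H g f) c = g b * f c) :
    (TensorProduct.comm k H H) (Coalgebra.comul (R := k) t) =
      (TensorProduct.map
          (LinearMap.mulLeft k binv ∘ₗ
            (HopfAlgebra.antipode (R := k) ∘ₗ HopfAlgebra.antipode (R := k)))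
          LinearMap.id)
        (Coalgebra.comul (R := k) t) :=
  stmt_7_general k H f nn x y hsys hri t ht b binv hb2 hbgl hbcu hbdist
end

section
/- Let H be an FH-algebra over a commutative ring k with FH-homomorphism f, antipode S, and right distinguished group-like element b. Then the left-integral Frobenius homomorphism g := f ∘ S^{-1} equals b·f, i.e. f(S^{-1}(a)) = f(a b) for all a ∈ H; in other words, b is the derivative of g with respect to f. -/
open TensorProduct

/-- Let `H` be an FH-algebra over a commutative ring `k` with FH-homomorphism `f`, inverse
antipode `Sinv`, and right distinguished group-like element `b` (an invertible group-like with
`g · f = g(b) · f` for all `g ∈ H*`).  Then the left-integral Frobenius homomorphism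
`g := f ∘ S⁻¹` equals `b · f`, i.e. `f (S⁻¹ a) = f (a * b)` for all `a ∈ H`; in other words
`b` is the derivative of `g` with respect to `f`. -/
theorem stmt_8 (k : Type*) [CommRing k] (H : Type*) [Ring H] [HopfAlgebra k H]
    (hfin : Module.Finite k H) (hproj : Module.Projective k H)
    (f : H →ₗ[k] k) (nn : ℕ) (x y : Fin nn → H) (hsys : IsFrobeniusSystem k H f x y)
    (hri : ∀ a : H,
      (TensorProduct.lid k H) ((TensorProduct.map f LinearMap.id) (Coalgebra.comul (R := k) a))
        = f a • (1 : H))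
    (Sinv : H →ₗ[k] H)
    (hS1 : ∀ a : H, Sinv (HopfAlgebra.antipode (R := k) a) = a)
    (hS2 : ∀ a : H, HopfAlgebra.antipode (R := k) (Sinv a) = a)
    (b binv : H) (hb1 : b * binv = 1) (hb2 : binv * b = 1)
    (hbgl : Coalgebra.comul (R := k) b = b ⊗ₜ[k] b) (hbcu : Coalgebra.counit (R := k) b = 1)
    (hbdist : ∀ (g : H →ₗ[k] k) (c : H), (conv k H g f) c = g b * f c) :
    ∀ a : H, f (Sinv a) = f (a * b) := by
  classical
  -- the left integral Λ
  set Λ : H := ∑ i, Coalgebra.counit (R := k) (y i) • x i with hΛdef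
  have h1 : ∀ c : H, f (c * Λ) = Coalgebra.counit (R := k) c := by
    intro c
    have h := (hsys c).2
    calc f (c * Λ) = ∑ i, Coalgebra.counit (R := k) (y i) * f (c * x i) := by
          rw [hΛdef, Finset.mul_sum, map_sum]
          refine Finset.sum_congr rfl fun i _ => ?_
          rw [mul_smul_comm, map_smul, smul_eq_mul]
      _ = Coalgebra.counit (R := k) (∑ i, f (c * x i) • y i) := by
          rw [map_sum]
          refine Finset.sum_congr rfl fun i _ => ?_
          rw [map_smul, smul_eq_mul, mul_comm]
      _ = Coalgebra.counit (R := k) c := by rw [h]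
  have h2 : f Λ = 1 := by
    have := h1 1
    rwa [one_mul, Bialgebra.counit_one] at this
  -- Λ is a left integral in H
  have h3 : ∀ h : H, h * Λ = Coalgebra.counit (R := k) h • Λ := by
    intro h
    have key : ∀ d : H, (∀ c : H, f (c * d) = 0) → d = 0 := by
      intro d hd
      have hh := (hsys d).1
      rw [← hh]
      simp [hd]
    have hz := key (h * Λ - Coalgebra.counit (R := k) h • Λ) ?_
    · exact sub_eq_zero.mp hz
    · intro c
      have : f (c * (h * Λ)) = Coalgebra.counit (R := k) c * Coalgebra.counit (R := k) h := by
        rw [← mul_assoc, h1, Bialgebra.counit_mul]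
      rw [mul_sub, map_sub, this, mul_smul_comm, map_smul, smul_eq_mul, h1, sub_eq_zero,
        mul_comm]
  set T : H ⊗[k] H := Coalgebra.comul (R := k) Λ with hTdef
  have hD2 : ∀ h : H, Coalgebra.comul (R := k) h * T = Coalgebra.counit (R := k) h • T := by
    intro h
    have := congrArg (Coalgebra.comul (R := k)) (h3 h)
    rwa [Bialgebra.comul_mul, map_smul] at this
  -- key Sweedler identity: (S h ⊗ 1) * T = (1 ⊗ h) * T
  have hL : ∀ h : H,
      ((HopfAlgebra.antipode (R := k) h) ⊗ₜ[k] (1 : H)) * T = ((1 : H) ⊗ₜ[k] h) * T := by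
    intro h
    let r := Coalgebra.Repr.arbitrary k h
    let σ := fun i => Coalgebra.Repr.arbitrary k (r.left i)
    let ρ := fun i => Coalgebra.Repr.arbitrary k (r.right i)
    have hsum1 : ∑ i ∈ r.index, Coalgebra.counit (R := k) (r.right i) • r.left i = h := by
      have h0 := congrArg (TensorProduct.rid k H) (Coalgebra.sum_tmul_counit_eq (R := k) r)
      rw [map_sum] at h0
      simp only [TensorProduct.rid_tmul, one_smul] at h0
      exact h0
    have hsum2 : ∑ i ∈ r.index, Coalgebra.counit (R := k) (r.left i) • r.right i = h := by
      have h0 := congrArg (TensorProduct.lid k H) (Coalgebra.sum_counit_tmul_eq (R := k) r)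
      rw [map_sum] at h0
      simp only [TensorProduct.lid_tmul, one_smul] at h0
      exact h0
    -- coassociativity
    have hco := Coalgebra.sum_tmul_tmul_eq r σ ρ
    let Φ : H ⊗[k] (H ⊗[k] H) →ₗ[k] H ⊗[k] H :=
      (LinearMap.rTensor H (LinearMap.mul' k H ∘ₗ
          LinearMap.rTensor H (HopfAlgebra.antipode (R := k)))) ∘ₗ
        (TensorProduct.assoc k H H H).symm.toLinearMap
    have hΦ : ∀ u v w : H,
        Φ (u ⊗ₜ[k] (v ⊗ₜ[k] w)) = (HopfAlgebra.antipode (R := k) u * v) ⊗ₜ[k] w := by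
      intro u v w
      simp [Φ]
    have hco2 : ∑ i ∈ r.index, ∑ j ∈ (σ i).index,
        ((HopfAlgebra.antipode (R := k) ((σ i).left j) * (σ i).right j) ⊗ₜ[k] r.right i)
        = ∑ i ∈ r.index, ∑ j ∈ (ρ i).index,
        ((HopfAlgebra.antipode (R := k) (r.left i) * (ρ i).left j) ⊗ₜ[k] (ρ i).right j) := by
      have := congrArg Φ hco
      simpa only [map_sum, hΦ] using this
    have lhs_eq : ∑ i ∈ r.index, ∑ j ∈ (σ i).index,
        ((HopfAlgebra.antipode (R := k) ((σ i).left j) * (σ i).right j) ⊗ₜ[k] r.right i)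
        = ((1 : H) ⊗ₜ[k] h) := by
      calc ∑ i ∈ r.index, ∑ j ∈ (σ i).index,
          ((HopfAlgebra.antipode (R := k) ((σ i).left j) * (σ i).right j) ⊗ₜ[k] r.right i)
          = ∑ i ∈ r.index, (∑ j ∈ (σ i).index,
              (HopfAlgebra.antipode (R := k) ((σ i).left j) * (σ i).right j)) ⊗ₜ[k] r.right i := by
            refine Finset.sum_congr rfl fun i _ => ?_
            rw [TensorProduct.sum_tmul]
        _ = ∑ i ∈ r.index, (Coalgebra.counit (R := k) (r.left i) • (1 : H)) ⊗ₜ[k] r.right i := by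
            refine Finset.sum_congr rfl fun i _ => ?_
            rw [HopfAlgebra.sum_antipode_mul_eq_smul (σ i)]
        _ = (1 : H) ⊗ₜ[k] (∑ i ∈ r.index, Coalgebra.counit (R := k) (r.left i) • r.right i) := by
            rw [TensorProduct.tmul_sum]
            refine Finset.sum_congr rfl fun i _ => ?_
            rw [TensorProduct.smul_tmul]
        _ = (1 : H) ⊗ₜ[k] h := by rw [hsum2]
    -- expand S h using hsum1
    have eS : (HopfAlgebra.antipode (R := k) h) ⊗ₜ[k] (1 : H)
        = ∑ i ∈ r.index, (Coalgebra.counit (R := k) (r.right i) •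
            HopfAlgebra.antipode (R := k) (r.left i)) ⊗ₜ[k] (1 : H) := by
      rw [← TensorProduct.sum_tmul]
      congr 1
      calc HopfAlgebra.antipode (R := k) h
          = HopfAlgebra.antipode (R := k)
              (∑ i ∈ r.index, Coalgebra.counit (R := k) (r.right i) • r.left i) := by rw [hsum1]
        _ = _ := by rw [map_sum]; exact Finset.sum_congr rfl fun i _ => by rw [map_smul]
    -- now compute (S h ⊗ 1) * T
    calc ((HopfAlgebra.antipode (R := k) h) ⊗ₜ[k] (1 : H)) * T
        = ∑ i ∈ r.index, ((HopfAlgebra.antipode (R := k) (r.left i)) ⊗ₜ[k] (1 : H)) *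
            (Coalgebra.counit (R := k) (r.right i) • T) := by
          rw [eS, Finset.sum_mul]
          refine Finset.sum_congr rfl fun i _ => ?_
          rw [mul_smul_comm, ← smul_mul_assoc, ← TensorProduct.smul_tmul']
      _ = ∑ i ∈ r.index, ((HopfAlgebra.antipode (R := k) (r.left i)) ⊗ₜ[k] (1 : H)) *
            (Coalgebra.comul (R := k) (r.right i) * T) := by
          refine Finset.sum_congr rfl fun i _ => ?_
          rw [hD2]
      _ = ∑ i ∈ r.index, ∑ j ∈ (ρ i).index,
            ((HopfAlgebra.antipode (R := k) (r.left i) * (ρ i).left j) ⊗ₜ[k] (ρ i).right j) * T := by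
          refine Finset.sum_congr rfl fun i _ => ?_
          rw [← (ρ i).eq, Finset.sum_mul, Finset.mul_sum]
          refine Finset.sum_congr rfl fun j _ => ?_
          rw [← mul_assoc, Algebra.TensorProduct.tmul_mul_tmul, one_mul]
      _ = (∑ i ∈ r.index, ∑ j ∈ (ρ i).index,
            ((HopfAlgebra.antipode (R := k) (r.left i) * (ρ i).left j) ⊗ₜ[k] (ρ i).right j)) * T := by
          rw [Finset.sum_mul]
          exact Finset.sum_congr rfl fun i _ => (Finset.sum_mul _ _ _).symm
      _ = ((1 : H) ⊗ₜ[k] h) * T := by rw [← hco2, lhs_eq]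
  -- extract: h = ∑ f (S h * Λ₁) • Λ₂
  let rΛ := Coalgebra.Repr.arbitrary k Λ
  have hTsum : T = ∑ i ∈ rΛ.index, rΛ.left i ⊗ₜ[k] rΛ.right i := by
    rw [hTdef, ← rΛ.eq]
  have hintegral : ∑ i ∈ rΛ.index, f (rΛ.left i) • rΛ.right i = (1 : H) := by
    have := hri Λ
    rw [← rΛ.eq, map_sum, map_sum] at this
    simp only [TensorProduct.map_tmul, LinearMap.id_coe, id_eq, TensorProduct.lid_tmul] at this
    rw [this, h2, one_smul]
  have hR : ∀ h : H,
      ∑ i ∈ rΛ.index, f (HopfAlgebra.antipode (R := k) h * rΛ.left i) • rΛ.right i = h := by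
    intro h
    have hLh := hL h
    have := congrArg (fun z => (TensorProduct.lid k H) ((TensorProduct.map f LinearMap.id) z)) hLh
    rw [hTsum] at this
    simp only [Finset.mul_sum, map_sum, Algebra.TensorProduct.tmul_mul_tmul, one_mul, mul_one,
      TensorProduct.map_tmul, LinearMap.id_coe, id_eq, TensorProduct.lid_tmul] at this
    rw [this]
    calc ∑ i ∈ rΛ.index, f (rΛ.left i) • (h * rΛ.right i)
        = h * ∑ i ∈ rΛ.index, f (rΛ.left i) • rΛ.right i := by
          rw [Finset.mul_sum]
          exact Finset.sum_congr rfl fun i _ => (mul_smul_comm _ _ _).symm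
      _ = h := by rw [hintegral, mul_one]
  -- conclude
  intro a
  have hRa := congrArg f (hR (Sinv a))
  rw [map_sum] at hRa
  simp only [hS2, map_smul, smul_eq_mul] at hRa
  have hconv := hbdist (f ∘ₗ LinearMap.mulLeft k a) Λ
  rw [conv] at hconv
  simp only [LinearMap.coe_comp, Function.comp_apply] at hconv
  rw [← rΛ.eq, map_sum, map_sum] at hconv
  simp only [TensorProduct.map_tmul, LinearMap.coe_comp, Function.comp_apply,
    LinearMap.mulLeft_apply, LinearMap.mul'_apply] at hconv
  rw [h2, mul_one] at hconv
  exact hRa.symm.trans hconv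
end

section
/- Suppose A and B are Frobenius algebras over the same commutative ring k with Frobenius systems (φ, x_i, y_i) and (ψ, z_j, w_j) respectively, B is a subalgebra of A such that A is projective as a right B-module, and the Nakayama automorphism η_A of A satisfies η_A(B) = B. Then A/B is a β-Frobenius extension with β = η_B ∘ (η_A^{-1}|_B) and with Frobenius homomorphism F : A → B given by F(a) = ∑_j φ(a z_j) w_j. -/
open TensorProduct

/-- Suppose `A` and `B` are Frobenius algebras over the same commutative ring `k` with
Frobenius systems `(φ, x, y)` and `(ψ, z, w)`, `B` is a subalgebra of `A` such that `A` is
projective as a right `B`-module (expressed by a finite dual basis, which is equivalent here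
since `A` is finitely generated), and the Nakayama automorphism `ηA` of `A` satisfies
`ηA (B) = B`.  Then `A/B` is a `β`-Frobenius extension with `β = ηB ∘ (ηA⁻¹|B)` (characterized
by `ηB⁻¹ (β b) = ηA⁻¹ b` for `b ∈ B`) and with Frobenius homomorphism
`F a = ∑ j, φ (a * z j) • w j`. -/
theorem stmt_12 (k : Type*) [CommRing k] (A : Type*) [Ring A] [Algebra k A]
    (hAfin : Module.Finite k A) (hAproj : Module.Projective k A)
    (B : Subalgebra k A)
    (hBfin : Module.Finite k B) (hBproj : Module.Projective k B)
    (φ : A →ₗ[k] k) (nA : ℕ) (x y : Fin nA → A) (hφ : IsFrobeniusSystem k A φ x y)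
    (ψ : B →ₗ[k] k) (nB : ℕ) (z w : Fin nB → B) (hψ : IsFrobeniusSystem k B ψ z w)
    (hprojB : ∃ (mm : ℕ) (u : Fin mm → A) (g : Fin mm → A → B),
      (∀ i, ∀ a a' : A, g i (a + a') = g i a + g i a') ∧
      (∀ i (a : A) (b : B), g i (a * (b : A)) = g i a * b) ∧
      (∀ a : A, ∑ i, u i * ((g i a : B) : A) = a))
    (ηA : A ≃ₐ[k] A) (hηA : ∀ a c : A, φ (ηA a * c) = φ (c * a))
    (ηB : B ≃ₐ[k] B) (hηB : ∀ a c : B, ψ (ηB a * c) = ψ (c * a))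
    (hstable : ∀ a : A, a ∈ B ↔ ηA a ∈ B) :
    ∃ β : B ≃ₐ[k] B,
      (∀ b : B, ((ηB.symm (β b) : B) : A) = ηA.symm (b : A)) ∧
      (∀ (b b' : B) (a : A),
          (∑ j, φ ((((b : A) * a * (b' : A)) * (z j : A))) • w j)
            = β b * (∑ j, φ (a * (z j : A)) • w j) * b') ∧
      (∃ (N : ℕ) (u v : Fin N → A),
        (∀ a : A,
          ∑ i, ((β.symm (∑ j, φ ((a * u i) * (z j : A)) • w j) : B) : A) * v i = a) ∧
        (∀ a : A,
          ∑ i, u i * ((∑ j, φ ((v i * a) * (z j : A)) • w j : B) : A) = a)) := by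
  classical
  obtain ⟨mm, u, g, hg_add, hg_lin, hg_dual⟩ := hprojB
  have hmem1 : ∀ b : B, ηA.symm (b : A) ∈ B := by
    intro b
    rw [hstable]
    simpa using b.2
  have hmem2 : ∀ b : B, ηA (b : A) ∈ B := fun b => (hstable _).mp b.2
  let e : B ≃ₐ[k] B :=
    { toFun := fun b => ⟨ηA.symm (b : A), hmem1 b⟩
      invFun := fun b => ⟨ηA (b : A), hmem2 b⟩
      left_inv := fun b => Subtype.ext (by simp)
      right_inv := fun b => Subtype.ext (by simp)
      map_mul' := fun b b' => Subtype.ext (by simp)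
      map_add' := fun b b' => Subtype.ext (by simp)
      commutes' := fun c => Subtype.ext (by simp) }
  let βe : B ≃ₐ[k] B := e.trans ηB
  let F : A →ₗ[k] B :=
    { toFun := fun a => ∑ j, φ (a * (z j : A)) • w j
      map_add' := by
        intro a a'
        simp [add_mul, add_smul, Finset.sum_add_distrib]
      map_smul' := by
        intro c a
        simp [smul_mul_assoc, mul_smul, Finset.smul_sum] }
  have hFdef : ∀ a : A, F a = ∑ j, φ (a * (z j : A)) • w j := fun _ => rfl
  -- ψ ∘ F = φ
  have hψF : ∀ a : A, ψ (F a) = φ a := by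
    intro a
    have hone : ((1 : B) : A) = ∑ j, ψ (w j) • (z j : A) := by
      have h := (hψ 1).1
      simp only [mul_one] at h
      rw [← h]
      push_cast
      rfl
    have ha : a = ∑ j, ψ (w j) • (a * (z j : A)) := by
      calc a = a * ((1 : B) : A) := by simp
        _ = ∑ j, ψ (w j) • (a * (z j : A)) := by
            rw [hone, Finset.mul_sum]
            exact Finset.sum_congr rfl fun j _ => (mul_smul_comm _ _ _)
    conv_rhs => rw [ha]
    rw [hFdef, map_sum, map_sum]
    exact Finset.sum_congr rfl fun j _ => by
      simp [smul_eq_mul, mul_comm]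
  -- the swap lemma
  have hswap : ∀ (a : A) (q : Fin nB → B),
      (∑ j, φ (a * ((q j : B) : A)) • w j)
        = ∑ l, φ (a * (z l : A)) • ∑ j, ψ (w l * q j) • w j := by
    intro a q
    have hq : ∀ j, ((q j : B) : A) = ∑ l, ψ (w l * q j) • (z l : A) := by
      intro j
      conv_lhs => rw [← (hψ (q j)).1]
      push_cast
      rfl
    calc ∑ j, φ (a * ((q j : B) : A)) • w j
        = ∑ j, ∑ l, (ψ (w l * q j) * φ (a * (z l : A))) • w j := by
          refine Finset.sum_congr rfl fun j _ => ?_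
          rw [hq j, Finset.mul_sum, map_sum, Finset.sum_smul]
          refine Finset.sum_congr rfl fun l _ => ?_
          rw [mul_smul_comm, map_smul, smul_eq_mul]
      _ = ∑ l, φ (a * (z l : A)) • ∑ j, ψ (w l * q j) • w j := by
          rw [Finset.sum_comm]
          refine Finset.sum_congr rfl fun l _ => ?_
          rw [Finset.smul_sum]
          refine Finset.sum_congr rfl fun j _ => ?_
          rw [smul_smul, mul_comm]
  -- F is right B-linear
  have hFright : ∀ (a : A) (b : B), F (a * (b : A)) = F a * b := by
    intro a b
    rw [hFdef, hFdef]
    have h1 : ∀ j, (a * (b : A)) * (z j : A) = a * (((b * z j : B) : A)) := by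
      intro j; push_cast; rw [mul_assoc]
    simp only [h1]
    rw [hswap a (fun j => b * z j)]
    have h2 : ∀ l, (∑ j, ψ (w l * (b * z j)) • w j) = w l * b := by
      intro l
      have h3 := (hψ (w l * b)).2
      simpa [mul_assoc] using h3
    simp only [h2]
    rw [Finset.sum_mul]
    exact Finset.sum_congr rfl fun l _ => (smul_mul_assoc _ _ _).symm
  -- F is left (β-twisted) B-linear
  have hFleft : ∀ (a : A) (b : B), F ((b : A) * a) = βe b * F a := by
    intro a b
    rw [hFdef, hFdef]
    have h1 : ∀ j, φ (((b : A) * a) * (z j : A)) = φ (a * (((z j * e b : B)) : A)) := by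
      intro j
      have hb : (b : A) = ηA ((e b : B) : A) := by simp [e]
      calc φ (((b : A) * a) * (z j : A))
          = φ (ηA ((e b : B) : A) * (a * (z j : A))) := by rw [← hb, mul_assoc]
        _ = φ ((a * (z j : A)) * ((e b : B) : A)) := hηA _ _
        _ = φ (a * (((z j * e b : B)) : A)) := by push_cast; rw [mul_assoc]
    simp only [h1]
    rw [hswap a (fun j => z j * e b)]
    have h2 : ∀ l, (∑ j, ψ (w l * (z j * e b)) • w j) = ηB (e b) * w l := by
      intro l
      have h3 : ∀ j, ψ (w l * (z j * e b)) = ψ ((ηB (e b) * w l) * z j) := by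
        intro j
        calc ψ (w l * (z j * e b)) = ψ ((w l * z j) * e b) := by rw [mul_assoc]
          _ = ψ (ηB (e b) * (w l * z j)) := (hηB _ _).symm
          _ = ψ ((ηB (e b) * w l) * z j) := by rw [mul_assoc]
      simp only [h3]
      exact (hψ (ηB (e b) * w l)).2
    simp only [h2]
    have hβ : βe b = ηB (e b) := rfl
    rw [hβ, Finset.mul_sum]
    exact Finset.sum_congr rfl fun l _ => (mul_smul_comm _ _ _).symm
  -- nondegeneracy
  have hnd : ∀ d : A, (∀ c : A, F (d * c) = 0) → d = 0 := by
    intro d hd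
    have h2 := (hφ d).2
    rw [← h2]
    refine Finset.sum_eq_zero fun i _ => ?_
    rw [← hψF (d * x i), hd (x i), map_zero, zero_smul]
  -- g is k-linear
  have hg_sum : ∀ i {ι : Type} (s : Finset ι) (f : ι → A),
      g i (∑ l ∈ s, f l) = ∑ l ∈ s, g i (f l) := by
    intro i ι s f
    exact map_sum (AddMonoidHom.mk' (g i) (hg_add i)) f s
  have hg_smul : ∀ i (c : k) (a : A), g i (c • a) = c • g i a := by
    intro i c a
    have h1 : c • a = a * ((algebraMap k B c : B) : A) := by
      simp [Algebra.smul_def, Algebra.commutes]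
    have h2 : ∀ b : B, b * algebraMap k B c = c • b := by
      intro b
      rw [Algebra.smul_def, Algebra.commutes]
    rw [h1, hg_lin, h2]
  let v : Fin mm → A := fun i => ∑ l, ψ (g i (x l)) • y l
  have hψg : ∀ i (a : A), ψ (g i a) = φ (v i * a) := by
    intro i a
    have ha := (hφ a).1
    have hva : v i * a = ∑ l, ψ (g i (x l)) • (y l * a) := by
      show (∑ l, ψ (g i (x l)) • y l) * a = _
      rw [Finset.sum_mul]
      exact Finset.sum_congr rfl fun l _ => smul_mul_assoc _ _ _
    conv_lhs => rw [← ha]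
    rw [hg_sum, map_sum, hva, map_sum]
    refine Finset.sum_congr rfl fun l _ => ?_
    rw [hg_smul, map_smul, map_smul]
    simp [smul_eq_mul, mul_comm]
  have hgF : ∀ i (a : A), g i a = F (v i * a) := by
    intro i a
    conv_lhs => rw [← (hψ (g i a)).2]
    rw [hFdef]
    refine Finset.sum_congr rfl fun j _ => ?_
    rw [← hg_lin i a (z j), hψg, mul_assoc]
  have hright : ∀ a : A, ∑ i, u i * ((F (v i * a) : B) : A) = a := by
    intro a
    conv_rhs => rw [← hg_dual a]
    exact Finset.sum_congr rfl fun i _ => by rw [hgF]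
  have hleft : ∀ a : A, ∑ i, ((βe.symm (F (a * u i)) : B) : A) * v i = a := by
    intro a
    set d : A := ∑ i, ((βe.symm (F (a * u i)) : B) : A) * v i with hd
    have key : ∀ c : A, F (d * c) = F (a * c) := by
      intro c
      rw [hd, Finset.sum_mul]
      simp only [mul_assoc]
      rw [map_sum]
      have h1 : ∀ i, F (((βe.symm (F (a * u i)) : B) : A) * (v i * c))
          = F (a * u i) * F (v i * c) := by
        intro i
        rw [hFleft, AlgEquiv.apply_symm_apply]
      simp only [h1]
      have h2 : ∀ i, F (a * u i) * F (v i * c)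
          = F (a * (u i * ((F (v i * c) : B) : A))) := by
        intro i
        rw [← mul_assoc, hFright]
      simp only [h2]
      rw [← map_sum, ← Finset.mul_sum, hright c]
    have hz : ∀ c, F ((d - a) * c) = 0 := by
      intro c
      rw [sub_mul, map_sub, key, sub_self]
    exact sub_eq_zero.mp (hnd _ hz)
  refine ⟨βe, ?_, ?_, ⟨mm, u, v, ?_, ?_⟩⟩
  · intro b
    simp [βe, e]
  · intro b b' a
    simp only [← hFdef]
    calc F ((b : A) * a * (b' : A)) = F ((b : A) * (a * (b' : A))) := by rw [mul_assoc]
      _ = βe b * F (a * (b' : A)) := hFleft _ _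
      _ = βe b * (F a * b') := by rw [hFright]
      _ = βe b * F a * b' := by rw [mul_assoc]
  · intro a
    simp only [← hFdef]
    exact hleft a
  · intro a
    simp only [← hFdef]
    exact hright a
end

section
/- Suppose A/S is a β-Frobenius extension with β-Frobenius system (E_S, x_i, y_i) and S/T is a γ-Frobenius extension with γ-Frobenius system (E_T, z_j, w_j). If β(T) = T, then A/T is a (γ ∘ β)-Frobenius extension with (γ ∘ β)-Frobenius system (E_T ∘ E_S, x_i z_j, β^{-1}(w_j) y_i). -/
/-- Transitivity of β-Frobenius extensions.  Suppose `T ⊆ S ⊆ A` is a tower of ring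
extensions, `A/S` is a `β`-Frobenius extension with `β`-Frobenius system `(E_S, x, y)` and
`S/T` is a `γ`-Frobenius extension with `γ`-Frobenius system `(E_T, z, w)`.  If `β (T) = T`,
then `A/T` is a `(γ ∘ β)`-Frobenius extension with system
`(E_T ∘ E_S, x i * z j, β⁻¹ (w j) * y i)`, where the automorphism `δ` of `T` is `γ ∘ β|T`. -/
theorem stmt_15 (A : Type*) [Ring A] (S T : Subring A) (hTS : T ≤ S)
    (β : S ≃+* S) (γ : T ≃+* T)
    (E_S : A → S) (nS : ℕ) (x y : Fin nS → A)
    (hESadd : ∀ a a' : A, E_S (a + a') = E_S a + E_S a')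
    (hESbimod : ∀ (s s' : S) (a : A),
      ((E_S ((s : A) * a * (s' : A)) : S) : A) = ((β s : S) : A) * ((E_S a : S) : A) * (s' : A))
    (hESdb1 : ∀ a : A, ∑ i, ((β.symm (E_S (a * x i)) : S) : A) * y i = a)
    (hESdb2 : ∀ a : A, ∑ i, x i * ((E_S (y i * a) : S) : A) = a)
    (E_T : S → T) (nT : ℕ) (z w : Fin nT → S)
    (hETadd : ∀ s s' : S, E_T (s + s') = E_T s + E_T s')
    (hETbimod : ∀ (t t' : T) (s : S),
      ((E_T (Subring.inclusion hTS t * s * Subring.inclusion hTS t') : T) : A)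
        = ((γ t : T) : A) * ((E_T s : T) : A) * ((t' : T) : A))
    (hETdb1 : ∀ s : S, ∑ j, Subring.inclusion hTS (γ.symm (E_T (s * z j))) * w j = s)
    (hETdb2 : ∀ s : S, ∑ j, z j * Subring.inclusion hTS (E_T (w j * s)) = s)
    (hβT : ∀ s : S, ((s : A) ∈ T) ↔ (((β s : S) : A) ∈ T)) :
    ∃ δ : T ≃+* T,
      (∀ t : T, ∃ u : T, (u : A) = ((β (Subring.inclusion hTS t) : S) : A) ∧ δ t = γ u) ∧
      (∀ (t t' : T) (a : A),
        ((E_T (E_S ((t : A) * a * (t' : A))) : T) : A)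
          = ((δ t : T) : A) * ((E_T (E_S a) : T) : A) * ((t' : T) : A)) ∧
      (∀ a : A, ∑ i, ∑ j,
        ((δ.symm (E_T (E_S (a * (x i * ((z j : S) : A))))) : T) : A)
          * (((β.symm (w j) : S) : A) * y i) = a) ∧
      (∀ a : A, ∑ i, ∑ j, (x i * ((z j : S) : A)) *
        ((E_T (E_S ((((β.symm (w j) : S) : A) * y i) * a)) : T) : A) = a) := by
  classical
  -- β maps T into T and β.symm maps T into T
  have hmem : ∀ t : T, (((β (Subring.inclusion hTS t)) : S) : A) ∈ T :=
    fun t => (hβT (Subring.inclusion hTS t)).mp t.2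
  have hmem' : ∀ t : T, (((β.symm (Subring.inclusion hTS t)) : S) : A) ∈ T := by
    intro t
    have h := (hβT (β.symm (Subring.inclusion hTS t))).mpr
    rw [RingEquiv.apply_symm_apply] at h
    exact h t.2
  -- β restricted to T
  set βT : T ≃+* T :=
  { toFun := fun t => ⟨_, hmem t⟩
    invFun := fun t => ⟨_, hmem' t⟩
    left_inv := by
      intro t
      apply Subtype.ext
      show ((β.symm (Subring.inclusion hTS ⟨_, hmem t⟩) : S) : A) = (t : A)
      have h1 : Subring.inclusion hTS (⟨_, hmem t⟩ : T) = β (Subring.inclusion hTS t) := rfl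
      rw [h1, RingEquiv.symm_apply_apply]
      rfl
    right_inv := by
      intro t
      apply Subtype.ext
      show ((β (Subring.inclusion hTS ⟨_, hmem' t⟩) : S) : A) = (t : A)
      have h1 : Subring.inclusion hTS (⟨_, hmem' t⟩ : T) = β.symm (Subring.inclusion hTS t) := rfl
      rw [h1, RingEquiv.apply_symm_apply]
      rfl
    map_mul' := by
      intro t t'
      apply Subtype.ext
      show ((β (Subring.inclusion hTS (t * t')) : S) : A) = _
      rw [map_mul, map_mul]
      push_cast
      rfl
    map_add' := by
      intro t t'
      apply Subtype.ext
      show ((β (Subring.inclusion hTS (t + t')) : S) : A) = _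
      rw [map_add, map_add]
      push_cast
      rfl } with hβTdef
  -- S-level versions of the bimodule conditions
  have hESbimodS : ∀ (s s' : S) (a : A), E_S ((s : A) * a * (s' : A)) = β s * E_S a * s' := by
    intro s s' a
    rw [← Subtype.coe_inj]
    rw [hESbimod]
    push_cast
    ring
  have hETbimodT : ∀ (t t' : T) (s : S),
      E_T (Subring.inclusion hTS t * s * Subring.inclusion hTS t') = γ t * E_T s * t' := by
    intro t t' s
    rw [← Subtype.coe_inj]
    rw [hETbimod]
    push_cast
    ring
  have hβTinc : ∀ t : T, Subring.inclusion hTS (βT t) = β (Subring.inclusion hTS t) :=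
    fun t => rfl
  have hβTsymm : ∀ t : T,
      ((βT.symm t : T) : A) = ((β.symm (Subring.inclusion hTS t) : S) : A) := fun t => rfl
  refine ⟨βT.trans γ, fun t => ⟨βT t, rfl, rfl⟩, ?_, ?_, ?_⟩
  · -- bimodule condition
    intro t t' a
    have e1 : (t : A) * a * (t' : A)
        = ((Subring.inclusion hTS t : S) : A) * a * ((Subring.inclusion hTS t' : S) : A) := rfl
    rw [e1, hESbimodS, ← hβTinc, hETbimodT]
    push_cast
    rfl
  · -- first dual basis equation
    intro a
    have step : ∀ i : Fin nS, (∑ j, (((βT.trans γ).symm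
          (E_T (E_S (a * (x i * ((z j : S) : A))))) : T) : A)
          * (((β.symm (w j) : S) : A) * y i))
        = ((β.symm (E_S (a * x i)) : S) : A) * y i := by
      intro i
      have hz : ∀ j, E_S (a * (x i * ((z j : S) : A))) = E_S (a * x i) * z j := by
        intro j
        have h := hESbimodS 1 (z j) (a * x i)
        simpa [mul_assoc] using h
      calc (∑ j, (((βT.trans γ).symm (E_T (E_S (a * (x i * ((z j : S) : A))))) : T) : A)
              * (((β.symm (w j) : S) : A) * y i))
          = ∑ j, ((β.symm (Subring.inclusion hTS
              (γ.symm (E_T (E_S (a * x i) * z j)))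
              * w j) : S) : A) * y i := by
            refine Finset.sum_congr rfl fun j _ => ?_
            rw [hz j]
            have e2 : (((βT.trans γ).symm (E_T (E_S (a * x i) * z j)) : T) : A)
                = ((β.symm (Subring.inclusion hTS (γ.symm (E_T (E_S (a * x i) * z j)))) : S) : A) := rfl
            rw [e2, map_mul]
            push_cast
            exact (mul_assoc _ _ _).symm
        _ = ((β.symm (∑ j, Subring.inclusion hTS
              (γ.symm (E_T (E_S (a * x i) * z j))) * w j) : S) : A) * y i := by
            rw [map_sum]
            push_cast
            rw [Finset.sum_mul]
        _ = ((β.symm (E_S (a * x i)) : S) : A) * y i := by rw [hETdb1]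
    calc (∑ i, ∑ j, (((βT.trans γ).symm (E_T (E_S (a * (x i * ((z j : S) : A))))) : T) : A)
            * (((β.symm (w j) : S) : A) * y i))
        = ∑ i, ((β.symm (E_S (a * x i)) : S) : A) * y i :=
          Finset.sum_congr rfl fun i _ => step i
      _ = a := hESdb1 a
  · -- second dual basis equation
    intro a
    have step : ∀ i : Fin nS, (∑ j, (x i * ((z j : S) : A)) *
          ((E_T (E_S ((((β.symm (w j) : S) : A) * y i) * a)) : T) : A))
        = x i * ((E_S (y i * a) : S) : A) := by
      intro i
      have hw : ∀ j, E_S ((((β.symm (w j) : S) : A) * y i) * a)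
          = w j * E_S (y i * a) := by
        intro j
        have h := hESbimodS (β.symm (w j)) 1 (y i * a)
        simpa [mul_assoc] using h
      calc (∑ j, (x i * ((z j : S) : A)) *
              ((E_T (E_S ((((β.symm (w j) : S) : A) * y i) * a)) : T) : A))
          = ∑ j, x i * (((z j * Subring.inclusion hTS (E_T (w j * E_S (y i * a))) : S)) : A) := by
            refine Finset.sum_congr rfl fun j _ => ?_
            rw [hw j]
            push_cast
            exact mul_assoc _ _ _
        _ = x i * (((∑ j, z j * Subring.inclusion hTS (E_T (w j * E_S (y i * a))) : S)) : A) := by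
            rw [← Finset.mul_sum]
            push_cast
            rfl
        _ = x i * ((E_S (y i * a) : S) : A) := by rw [hETdb2]
    calc (∑ i, ∑ j, (x i * ((z j : S) : A)) *
            ((E_T (E_S ((((β.symm (w j) : S) : A) * y i) * a)) : T) : A))
        = ∑ i, x i * ((E_S (y i * a) : S) : A) :=
          Finset.sum_congr rfl fun i _ => step i
      _ = a := hESdb2 a
end

section
/- If H' is a unimodular almost cocommutative FH-algebra over a commutative ring k, then H' is a symmetric algebra, i.e. it admits a Frobenius homomorphism that is a trace. -/
/-!
Let `t = ∑ ε(yᵢ) xᵢ`, so that `f (c t) = ε c`. Nondegeneracy of `f` makes `t` a left integral,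
hence a right integral by unimodularity. Since `f` is a right integral in `H*`,
`∑ f(a t₁) S(t₂) = a` (so `S` is onto) and `∑ f(S t₂) t₁ = 1`; together with
`Δt (c ⊗ 1) = Δt (1 ⊗ S c)` they show that the Nakayama automorphism of `f` is `S²`:
`f (S²(b) a) = f (a b)`. Almost cocommutativity makes the Drinfeld element `u = ∑ S(R⁽²⁾) R⁽¹⁾`
invertible with `u a = S²(a) u`, so `f (u ·)` is again a Frobenius homomorphism, and it is a
trace: `f (u a b) = f (S²(b) u a) = f (u b a)`.
-/

open TensorProduct

namespace IsFrobeniusSystem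

variable {k A : Type*} [CommRing k] [Ring A] [Algebra k A] {φ : A →ₗ[k] k} {n : ℕ}
  {x y : Fin n → A}

theorem eq_of_forall_apply_mul_eq (h : IsFrobeniusSystem k A φ x y) {z w : A}
    (hzw : ∀ c, φ (c * z) = φ (c * w)) : z = w := by
  rw [← (h z).1, ← (h w).1]
  simp only [hzw]

theorem apply_mul_sum_smul (h : IsFrobeniusSystem k A φ x y) (ψ : A →ₗ[k] k) (c : A) :
    φ (c * ∑ i, ψ (y i) • x i) = ψ c := by
  conv_rhs => rw [← (h c).2, map_sum]
  simp only [Finset.mul_sum, mul_smul_comm, map_sum, map_smul, smul_eq_mul, mul_comm]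

theorem mulLeft_unit (h : IsFrobeniusSystem k A φ x y) (u : Aˣ) :
    IsFrobeniusSystem k A (φ ∘ₗ LinearMap.mulLeft k (u : A)) x (fun i => ↑u⁻¹ * y i) := by
  intro a
  refine ⟨?_, ?_⟩
  · simpa [← mul_assoc] using (h a).1
  · simpa [mul_assoc, Finset.mul_sum, mul_smul_comm] using
      congrArg ((↑u⁻¹ : A) * ·) (h (u * a)).2

end IsFrobeniusSystem

namespace Coalgebra

variable {R A ι : Type*} [CommSemiring R] [AddCommMonoid A] [Module R A] [Coalgebra R A] {a : A}

theorem sum_smul_counit (𝓡 : Repr R a ι) :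
    ∑ i ∈ 𝓡.index, counit (R := R) (𝓡.right i) • 𝓡.left i = a := by
  simpa only [map_sum, _root_.TensorProduct.rid_tmul, one_smul] using
    congrArg (_root_.TensorProduct.rid R A) (sum_tmul_counit_eq 𝓡)

end Coalgebra

namespace HopfAlgebra

open scoped Coalgebra
open Coalgebra (Repr counit comul)

section Integrals

variable {k H : Type*} [CommSemiring k] [Semiring H] [HopfAlgebra k H]

variable (k) in
def IsRightIntegral (t : H) : Prop := ∀ a : H, t * a = counit (R := k) a • t

variable (k) in
def IsLeftIntegral (t : H) : Prop := ∀ a : H, a * t = counit (R := k) a • t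

/-- A right integral in the dual algebra `H*`. -/
def IsRightIntegralFunctional (f : H →ₗ[k] k) : Prop :=
  ∀ a : H, TensorProduct.lid k H (map f LinearMap.id (comul a)) = f a • (1 : H)

namespace IsRightIntegralFunctional

variable {f : H →ₗ[k] k} (hf : IsRightIntegralFunctional f)
include hf

theorem sum_apply_smul {a : H} {ι : Type*} (𝓡 : Repr k a ι) :
    ∑ i ∈ 𝓡.index, f (𝓡.left i) • 𝓡.right i = f a • 1 := by
  simpa [← 𝓡.eq, map_sum] using hf a

theorem sum_apply_mul_smul_antipode {t : H} (ht : ∀ c, f (c * t) = counit c) (a : H) :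
    ∑ j ∈ (ℛ k t).index, f (a * (ℛ k t).left j) • antipode k ((ℛ k t).right j) = a := by
  set 𝓣 := ℛ k t
  set 𝓐 := ℛ k a
  -- On the two sides of coassociativity for `t`, `Ψ` collapses by the integral property of `f`
  -- and by the antipode axiom respectively.
  let Ψ : H ⊗[k] (H ⊗[k] H) →ₗ[k] H := ∑ i ∈ 𝓐.index,
    (TensorProduct.lid k H).toLinearMap ∘ₗ
      map (f ∘ₗ LinearMap.mulLeft k (𝓐.left i))
        (LinearMap.mulLeft k (𝓐.right i) ∘ₗ LinearMap.mul' k H ∘ₗ map LinearMap.id (antipode k))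
  have hΨ (p q r : H) : Ψ (p ⊗ₜ (q ⊗ₜ r)) =
      ∑ i ∈ 𝓐.index, f (𝓐.left i * p) • (𝓐.right i * (q * antipode k r)) := by
    simp [Ψ]
  have key := congrArg Ψ
    (Coalgebra.sum_tmul_tmul_eq 𝓣 (fun j => ℛ k (𝓣.left j)) (fun j => ℛ k (𝓣.right j)))
  simp only [map_sum, hΨ] at key
  have hleft (j) : ∑ l ∈ (ℛ k (𝓣.left j)).index, ∑ i ∈ 𝓐.index,
      f (𝓐.left i * (ℛ k (𝓣.left j)).left l) •
        (𝓐.right i * ((ℛ k (𝓣.left j)).right l * antipode k (𝓣.right j))) =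
      f (a * 𝓣.left j) • antipode k (𝓣.right j) := by
    have := congrArg (· * antipode k (𝓣.right j)) (hf.sum_apply_smul (𝓐.mul (ℛ k (𝓣.left j))))
    simp only [Repr.mul_index, Repr.mul_left, Repr.mul_right, Finset.sum_product, Finset.sum_mul,
      smul_mul_assoc, mul_assoc, one_mul] at this
    rw [Finset.sum_comm, this]
  have hright : ∑ j ∈ 𝓣.index, ∑ l ∈ (ℛ k (𝓣.right j)).index, ∑ i ∈ 𝓐.index,
      f (𝓐.left i * 𝓣.left j) •
        (𝓐.right i * ((ℛ k (𝓣.right j)).left l * antipode k ((ℛ k (𝓣.right j)).right l))) =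
      a := by
    simp only [Finset.sum_comm (s := (ℛ k (𝓣.right _)).index), ← Finset.mul_sum,
      ← Finset.smul_sum, sum_mul_antipode_eq_smul]
    rw [Finset.sum_comm]
    conv_rhs => rw [← Coalgebra.sum_counit_smul 𝓐]
    refine Finset.sum_congr rfl fun i _ => ?_
    have hε : f (𝓐.left i * ∑ j ∈ 𝓣.index, counit (R := k) (𝓣.right j) • 𝓣.left j) =
        counit (𝓐.left i) := by
      rw [Coalgebra.sum_smul_counit, ht]
    rw [← hε, Finset.mul_sum, map_sum, Finset.sum_smul]
    simp only [mul_smul_comm, mul_one, map_smul, smul_eq_mul, mul_smul, mul_comm]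
  exact (Finset.sum_congr rfl fun j _ => hleft j).symm.trans (key.trans hright)

theorem antipode_surjective {t : H} (ht : ∀ c, f (c * t) = counit c) :
    Function.Surjective (antipode k (A := H)) :=
  fun a => ⟨∑ j ∈ (ℛ k t).index, f (a * (ℛ k t).left j) • (ℛ k t).right j, by
    simpa only [map_sum, map_smul] using hf.sum_apply_mul_smul_antipode ht a⟩

end IsRightIntegralFunctional

theorem IsRightIntegral.comul_mul_tmul_one {t : H} (ht : IsRightIntegral k t) (c : H) :
    comul (R := k) t * (c ⊗ₜ 1) = comul (R := k) t * (1 ⊗ₜ antipode k c) := by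
  set 𝓒 := ℛ k c
  let Λ : H ⊗[k] (H ⊗[k] H) →ₗ[k] H ⊗[k] H := LinearMap.mulLeft k (comul t) ∘ₗ
    map LinearMap.id (LinearMap.mul' k H ∘ₗ map LinearMap.id (antipode k))
  have hΛ (p q r : H) : Λ (p ⊗ₜ (q ⊗ₜ r)) = comul (R := k) t * (p ⊗ₜ (q * antipode k r)) := by
    simp [Λ]
  have key := congrArg Λ
    (Coalgebra.sum_tmul_tmul_eq 𝓒 (fun i => ℛ k (𝓒.left i)) (fun i => ℛ k (𝓒.right i)))
  simp only [map_sum, hΛ] at key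
  have hlhs (i) : ∑ l ∈ (ℛ k (𝓒.left i)).index, comul (R := k) t *
      ((ℛ k (𝓒.left i)).left l ⊗ₜ ((ℛ k (𝓒.left i)).right l * antipode k (𝓒.right i))) =
      comul (R := k) t * (1 ⊗ₜ antipode k (counit (R := k) (𝓒.left i) • 𝓒.right i)) := by
    have (p q r : H) : p ⊗ₜ[k] (q * r) = (p ⊗ₜ q) * (1 ⊗ₜ r) := by
      rw [Algebra.TensorProduct.tmul_mul_tmul, mul_one]
    simp only [this, ← mul_assoc, ← Finset.mul_sum, ← Finset.sum_mul, (ℛ k (𝓒.left i)).eq,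
      ← Bialgebra.comul_mul, ht _, map_smul, smul_mul_assoc, tmul_smul, mul_smul_comm]
  rw [Finset.sum_congr rfl fun i _ => hlhs i] at key
  conv_rhs => rw [← Coalgebra.sum_counit_smul 𝓒, map_sum, tmul_sum, Finset.mul_sum]
  rw [key]
  conv_lhs => rw [← Coalgebra.sum_smul_counit 𝓒, sum_tmul, Finset.mul_sum]
  simp only [← Finset.mul_sum, ← tmul_sum, sum_mul_antipode_eq_smul, tmul_smul, smul_tmul']

end Integrals

section Nakayama

variable {k H : Type*} [CommRing k] [Ring H] [HopfAlgebra k H] {f : H →ₗ[k] k} {n : ℕ}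
  {x y : Fin n → H}

theorem isLeftIntegral_of_apply_mul_eq_counit (hsys : IsFrobeniusSystem k H f x y) {t : H}
    (ht : ∀ c, f (c * t) = counit c) : IsLeftIntegral k t := fun a =>
  hsys.eq_of_forall_apply_mul_eq fun c => by
    rw [← mul_assoc, ht, mul_smul_comm, map_smul, ht, Bialgebra.counit_mul, smul_eq_mul, mul_comm]

theorem sum_apply_antipode_smul_eq_one (hsys : IsFrobeniusSystem k H f x y)
    (hf : IsRightIntegralFunctional f) {t : H} (ht : ∀ c, f (c * t) = counit c) :
    ∑ j ∈ (ℛ k t).index, f (antipode k ((ℛ k t).right j)) • (ℛ k t).left j = 1 := by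
  refine hsys.eq_of_forall_apply_mul_eq fun c => ?_
  conv_rhs => rw [mul_one, ← hf.sum_apply_mul_smul_antipode ht c]
  simp only [Finset.mul_sum, mul_smul_comm, map_sum, map_smul, smul_eq_mul, mul_comm]

theorem apply_antipode_antipode_mul (hsys : IsFrobeniusSystem k H f x y)
    (hf : IsRightIntegralFunctional f) {t : H} (ht : ∀ c, f (c * t) = counit c)
    (htr : IsRightIntegral k t) (a b : H) :
    f (antipode k (antipode k b) * a) = f (a * b) := by
  let χ : H ⊗[k] H →ₗ[k] k :=
    LinearMap.mul' k k ∘ₗ map (f ∘ₗ LinearMap.mulLeft k a) (f ∘ₗ antipode k)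
  have hχ (p q : H) : χ (p ⊗ₜ q) = f (a * p) * f (antipode k q) := by simp [χ]
  have key := congrArg χ (htr.comul_mul_tmul_one b)
  rw [← (ℛ k t).eq, Finset.sum_mul, Finset.sum_mul] at key
  simp only [Algebra.TensorProduct.tmul_mul_tmul, mul_one, map_sum, hχ] at key
  calc f (antipode k (antipode k b) * a)
      = f (antipode k (antipode k b) *
          ∑ j ∈ (ℛ k t).index, f (a * (ℛ k t).left j) • antipode k ((ℛ k t).right j)) := by
        rw [hf.sum_apply_mul_smul_antipode ht]
    _ = _ := by
        simp only [Finset.mul_sum, mul_smul_comm, map_sum, map_smul, smul_eq_mul,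
          antipode_mul_antidistrib]
    _ = _ := key.symm
    _ = f (a * ((∑ j ∈ (ℛ k t).index, f (antipode k ((ℛ k t).right j)) • (ℛ k t).left j) *
          b)) := by
        simp only [Finset.sum_mul, Finset.mul_sum, smul_mul_assoc, mul_smul_comm, map_sum,
          map_smul, smul_eq_mul, mul_comm]
    _ = f (a * b) := by rw [sum_apply_antipode_smul_eq_one hsys hf ht, one_mul]

end Nakayama

section Drinfeld

variable {k H : Type*} [CommSemiring k] [Semiring H] [HopfAlgebra k H]

variable (k H) in
/-- Applied to the R-matrix, this is the Drinfeld element `u = ∑ S(R⁽²⁾) R⁽¹⁾`. -/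
def drinfeldMap : H ⊗[k] H →ₗ[k] H :=
  LinearMap.mul' k H ∘ₗ map (antipode k) LinearMap.id ∘ₗ (TensorProduct.comm k H H).toLinearMap

@[simp]
theorem drinfeldMap_tmul (p q : H) : drinfeldMap k H (p ⊗ₜ q) = antipode k q * p := by
  simp [drinfeldMap]

theorem drinfeldMap_mul_tmul (X : H ⊗[k] H) (p q : H) :
    drinfeldMap k H (X * (p ⊗ₜ q)) = antipode k q * drinfeldMap k H X * p := by
  induction X using TensorProduct.induction_on with
  | zero => simp
  | tmul P Q => simp [antipode_mul_antidistrib, mul_assoc]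
  | add X Y hX hY => simp [add_mul, hX, hY, mul_add]

theorem drinfeldMap_comm_comul_mul (a : H) (X : H ⊗[k] H) :
    drinfeldMap k H (TensorProduct.comm k H H (comul a) * X) =
      counit (R := k) a • drinfeldMap k H X := by
  induction X using TensorProduct.induction_on with
  | zero => simp
  | tmul p q =>
    have h := congrArg (antipode k q * · * p) (sum_antipode_mul_eq_smul (ℛ k a))
    simp only [Finset.mul_sum, Finset.sum_mul, smul_mul_assoc, mul_smul_comm, mul_one] at h
    rw [← (ℛ k a).eq, map_sum, Finset.sum_mul, map_sum, drinfeldMap_tmul, ← h]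
    simp [antipode_mul_antidistrib, mul_assoc]
  | add X Y hX hY => simp [mul_add, hX, hY]

variable {R : H ⊗[k] H} (hR : ∀ a : H, R * comul a = TensorProduct.comm k H H (comul a) * R)
include hR

theorem sum_antipode_mul_drinfeldMap_mul {a : H} {ι : Type*} (𝓐 : Repr k a ι) :
    ∑ i ∈ 𝓐.index, antipode k (𝓐.right i) * drinfeldMap k H R * 𝓐.left i =
      counit (R := k) a • drinfeldMap k H R := by
  simp only [← drinfeldMap_mul_tmul, ← map_sum, ← Finset.mul_sum, 𝓐.eq, hR,
    drinfeldMap_comm_comul_mul]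

theorem drinfeldMap_mul (a : H) :
    drinfeldMap k H R * a = antipode k (antipode k a) * drinfeldMap k H R := by
  set 𝓐 := ℛ k a
  let κ : H ⊗[k] (H ⊗[k] H) →ₗ[k] H :=
    LinearMap.mul' k H ∘ₗ TensorProduct.comm k H H ∘ₗ
      map LinearMap.id (LinearMap.mulRight k (drinfeldMap k H R) ∘ₗ antipode k ∘ₗ
        LinearMap.mul' k H ∘ₗ map LinearMap.id (antipode k))
  have hκ (p q r : H) :
      κ (p ⊗ₜ (q ⊗ₜ r)) = antipode k (q * antipode k r) * drinfeldMap k H R * p := by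
    simp [κ]
  have key := congrArg κ
    (Coalgebra.sum_tmul_tmul_eq 𝓐 (fun i => ℛ k (𝓐.left i)) (fun i => ℛ k (𝓐.right i)))
  simp only [map_sum, hκ] at key
  have hlhs (i) : ∑ l ∈ (ℛ k (𝓐.left i)).index,
      antipode k ((ℛ k (𝓐.left i)).right l * antipode k (𝓐.right i)) * drinfeldMap k H R *
        (ℛ k (𝓐.left i)).left l =
      antipode k (antipode k (counit (R := k) (𝓐.left i) • 𝓐.right i)) * drinfeldMap k H R := by
    simp only [antipode_mul_antidistrib, mul_assoc, ← Finset.mul_sum]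
    simp only [← mul_assoc]
    rw [sum_antipode_mul_drinfeldMap_mul hR, map_smul, map_smul, mul_smul_comm, smul_mul_assoc]
  rw [Finset.sum_congr rfl fun i _ => hlhs i, ← Finset.sum_mul, ← map_sum, ← map_sum,
    Coalgebra.sum_counit_smul] at key
  rw [key]
  conv_lhs => rw [← Coalgebra.sum_smul_counit 𝓐, Finset.mul_sum]
  simp only [← Finset.sum_mul, ← map_sum, sum_mul_antipode_eq_smul, map_smul, antipode_one,
    smul_mul_assoc, one_mul, mul_smul_comm]

end Drinfeld

theorem isUnit_drinfeldMap {k H : Type*} [CommRing k] [Ring H] [HopfAlgebra k H]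
    {R Rinv : H ⊗[k] H} (hR : ∀ a : H, R * comul a = TensorProduct.comm k H H (comul a) * R)
    (hRRinv : R * Rinv = 1) (hS : Function.Surjective (antipode k (A := H))) :
    IsUnit (drinfeldMap k H R) := by
  have hv (Y : H ⊗[k] H) : drinfeldMap k H (R * (antipode k).lTensor H Y) =
      drinfeldMap k H R * LinearMap.mul' k H (TensorProduct.comm k H H Y) := by
    induction Y using TensorProduct.induction_on with
    | zero => simp
    | tmul p q => simp [drinfeldMap_mul_tmul, ← drinfeldMap_mul hR, mul_assoc]
    | add Y Z hY hZ => simp [mul_add, hY, hZ]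
  obtain ⟨Y, hY⟩ := LinearMap.lTensor_surjective H hS Rinv
  set v := LinearMap.mul' k H (TensorProduct.comm k H H Y)
  have huv : drinfeldMap k H R * v = 1 := by
    rw [← hv, hY, hRRinv, Algebra.TensorProduct.one_def, drinfeldMap_tmul, antipode_one,
      one_mul]
  have hwu : antipode k (antipode k v) * drinfeldMap k H R = 1 := by
    rw [← drinfeldMap_mul hR, huv]
  exact ⟨⟨_, v, huv, left_inv_eq_right_inv hwu huv ▸ hwu⟩, rfl⟩

end HopfAlgebra

theorem stmt_19_general (k : Type*) [CommRing k] (H : Type*) [Ring H] [HopfAlgebra k H]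
    (f : H →ₗ[k] k) (nn : ℕ) (x y : Fin nn → H) (hsys : IsFrobeniusSystem k H f x y)
    (hri : ∀ a : H,
      (TensorProduct.lid k H) ((TensorProduct.map f LinearMap.id) (Coalgebra.comul (R := k) a))
        = f a • (1 : H))
    (huni : {t : H | ∀ a : H, t * a = Coalgebra.counit (R := k) a • t}
          = {t : H | ∀ a : H, a * t = Coalgebra.counit (R := k) a • t})
    (R Rinv : H ⊗[k] H) (hR1 : R * Rinv = 1) (hR2 : Rinv * R = 1)
    (hR : ∀ a : H, R * Coalgebra.comul (R := k) a * Rinv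
        = (TensorProduct.comm k H H) (Coalgebra.comul (R := k) a)) :
    ∃ (φ : H →ₗ[k] k) (m : ℕ) (u v : Fin m → H),
      IsFrobeniusSystem k H φ u v ∧ ∀ a b : H, φ (a * b) = φ (b * a) := by
  have hf : HopfAlgebra.IsRightIntegralFunctional f := hri
  have ht := hsys.apply_mul_sum_smul (Coalgebra.counit (R := k))
  have htr : HopfAlgebra.IsRightIntegral k (∑ i, Coalgebra.counit (R := k) (y i) • x i) :=
    (Set.ext_iff.mp huni _).mpr (HopfAlgebra.isLeftIntegral_of_apply_mul_eq_counit hsys ht)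
  have hRΔ (a : H) :
      R * Coalgebra.comul a = TensorProduct.comm k H H (Coalgebra.comul a) * R := by
    rw [← hR, mul_assoc _ Rinv, hR2, mul_one]
  obtain ⟨u, hu⟩ := HopfAlgebra.isUnit_drinfeldMap hRΔ hR1 (hf.antipode_surjective ht)
  refine ⟨f ∘ₗ LinearMap.mulLeft k (u : H), nn, x, fun i => ↑u⁻¹ * y i, hsys.mulLeft_unit u,
    fun a b => ?_⟩
  simp only [LinearMap.comp_apply, LinearMap.mulLeft_apply]
  rw [← mul_assoc, ← HopfAlgebra.apply_antipode_antipode_mul hsys hf ht htr, ← mul_assoc, hu,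
    ← HopfAlgebra.drinfeldMap_mul hRΔ, mul_assoc]

/-- If `H'` is a unimodular almost cocommutative FH-algebra over a commutative ring `k`
(the set of right integrals equals the set of left integrals, and there is an invertible
`R ∈ H' ⊗ H'` with `R Δ(a) R⁻¹ = Δᵒᵖ(a)` for all `a`), then `H'` is a symmetric algebra:
it admits a Frobenius homomorphism which is a trace. -/
theorem stmt_19 (k : Type*) [CommRing k] (H : Type*) [Ring H] [HopfAlgebra k H]
    (hfin : Module.Finite k H) (hproj : Module.Projective k H)
    (f : H →ₗ[k] k) (nn : ℕ) (x y : Fin nn → H) (hsys : IsFrobeniusSystem k H f x y)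
    (hri : ∀ a : H,
      (TensorProduct.lid k H) ((TensorProduct.map f LinearMap.id) (Coalgebra.comul (R := k) a))
        = f a • (1 : H))
    (huni : {t : H | ∀ a : H, t * a = Coalgebra.counit (R := k) a • t}
          = {t : H | ∀ a : H, a * t = Coalgebra.counit (R := k) a • t})
    (R Rinv : H ⊗[k] H) (hR1 : R * Rinv = 1) (hR2 : Rinv * R = 1)
    (hR : ∀ a : H, R * Coalgebra.comul (R := k) a * Rinv
        = (TensorProduct.comm k H H) (Coalgebra.comul (R := k) a)) :
    ∃ (φ : H →ₗ[k] k) (m : ℕ) (u v : Fin m → H),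
      IsFrobeniusSystem k H φ u v ∧ ∀ a b : H, φ (a * b) = φ (b * a) :=
  stmt_19_general k H f nn x y hsys hri huni R Rinv hR1 hR2 hR
end
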